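/- arXiv:1012.4634 — 7 statements merged into one kernel-verified Lean document; each statement's English description precedes it below -/
import Mathlib

section
/- For all integers m, n ≥ 3, the brush number of C_m × C_n is at most 2(m + n − 2). -/
/-!
Order the vertices of `C_m × C_n` row by row. For the natural order of a cycle, vertex `0` has two
later neighbours, the last vertex two earlier ones and every other vertex one of each; in a box
product ordered lexicographically, later and earlier neighbours add up over the two factors. So
only the vertices `(0, b)` with `b` not last and `(a, 0)` with `a` not last need brushes: two each,
and four at `(0, 0)`, which lies on both lines; in total `2 (n - 1) + 2 (m - 1)`.
-/

open Finset SimpleGraph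

open scoped Classical in
/-- The number of brushes needed at `v` in the cleaning process induced by the
ordering `σ` of the vertices: `max (0, d⁺(v) - d⁻(v))` (truncated `ℕ` subtraction),
where `d⁺(v)` counts neighbours `u` with `σ v < σ u` and `d⁻(v)` those with `σ u < σ v`. -/
noncomputable def brushWeight {V : Type} [Fintype V] (G : SimpleGraph V)
    (σ : V ≃ Fin (Fintype.card V)) (v : V) : ℕ :=
  (Finset.univ.filter (fun u => G.Adj v u ∧ σ v < σ u)).card -
    (Finset.univ.filter (fun u => G.Adj v u ∧ σ u < σ v)).card

/-- The brush number of `G`: the minimum over all orderings `σ` of the vertices of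
the total number of brushes `∑ v, w_σ(v)`. -/
noncomputable def brushNumber {V : Type} [Fintype V] (G : SimpleGraph V) : ℕ :=
  ⨅ σ : V ≃ Fin (Fintype.card V), ∑ v, brushWeight G σ v

theorem brushNumber_le_sum_brushWeight {V : Type} [Fintype V] (G : SimpleGraph V)
    (σ : V ≃ Fin (Fintype.card V)) : brushNumber G ≤ ∑ v, brushWeight G σ v :=
  ciInf_le (OrderBot.bddBelow _) σ

section OrientationDegrees

variable {V W α : Type*} [Fintype V] [Fintype W] [LT α]

open scoped Classical in
noncomputable def upDegree (G : SimpleGraph V) (r : V → α) (v : V) : ℕ :=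
  #{u | G.Adj v u ∧ r v < r u}

open scoped Classical in
noncomputable def downDegree (G : SimpleGraph V) (r : V → α) (v : V) : ℕ :=
  #{u | G.Adj v u ∧ r u < r v}

open scoped Classical in
theorem card_filter_boxProd_adj (G : SimpleGraph V) (H : SimpleGraph W) (v : V × W)
    (p : V × W → Prop) :
    #{u | (G □ H).Adj v u ∧ p u} =
      #{a | G.Adj v.1 a ∧ p (a, v.2)} + #{b | H.Adj v.2 b ∧ p (v.1, b)} := by
  have hsplit : ({u | (G □ H).Adj v u ∧ p u} : Finset (V × W)) =
      ({a | G.Adj v.1 a ∧ p (a, v.2)} : Finset V).map (.sectL V v.2) ∪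
      ({b | H.Adj v.2 b ∧ p (v.1, b)} : Finset W).map (.sectR v.1 W) := by
    ext ⟨a, b⟩
    simp only [boxProd_adj, mem_filter, mem_univ, true_and, mem_union, mem_map,
      Function.Embedding.sectL_apply, Function.Embedding.sectR_apply, Prod.mk.injEq]
    constructor
    · rintro ⟨⟨hG, rfl⟩ | ⟨hH, rfl⟩, hp⟩
      exacts [Or.inl ⟨a, ⟨hG, hp⟩, rfl, rfl⟩, Or.inr ⟨b, ⟨hH, hp⟩, rfl, rfl⟩]
    · rintro (⟨a, ⟨hG, hp⟩, rfl, rfl⟩ | ⟨b, ⟨hH, hp⟩, rfl, rfl⟩)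
      exacts [⟨Or.inl ⟨hG, rfl⟩, hp⟩, ⟨Or.inr ⟨hH, rfl⟩, hp⟩]
  rw [hsplit, card_union_of_disjoint, card_map, card_map]
  simp only [Finset.disjoint_left, mem_map, mem_filter, mem_univ, true_and,
    Function.Embedding.sectL_apply, Function.Embedding.sectR_apply]
  rintro _ ⟨a, ⟨hadj, -⟩, rfl⟩ ⟨b, -, hb⟩
  exact hadj.ne (congrArg Prod.fst hb)

theorem upDegree_boxProd (G : SimpleGraph V) (H : SimpleGraph W) (r : V × W → α)
    (v : V × W) :
    upDegree (G □ H) r v =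
      upDegree G (fun a => r (a, v.2)) v.1 + upDegree H (fun b => r (v.1, b)) v.2 :=
  card_filter_boxProd_adj G H v _

theorem downDegree_boxProd (G : SimpleGraph V) (H : SimpleGraph W) (r : V × W → α)
    (v : V × W) :
    downDegree (G □ H) r v =
      downDegree G (fun a => r (a, v.2)) v.1 + downDegree H (fun b => r (v.1, b)) v.2 :=
  card_filter_boxProd_adj G H v _

end OrientationDegrees

theorem brushWeight_eq_upDegree_sub_downDegree {V : Type} [Fintype V] (G : SimpleGraph V)
    (σ : V ≃ Fin (Fintype.card V)) (v : V) :
    brushWeight G σ v = upDegree G σ v - downDegree G σ v := by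
  unfold brushWeight upDegree downDegree
  congr!

section Cycle

variable {α : Type*} [Preorder α] {n : ℕ}

-- The filter's decidability instance is left arbitrary so that this rewrites the classical
-- filters in `upDegree` and `downDegree`.
theorem card_filter_cycleGraph_adj (i : Fin (n + 3)) (p : Fin (n + 3) → Prop)
    [DecidablePred p] [DecidablePred fun c => (cycleGraph (n + 3)).Adj i c ∧ p c] :
    #{c | (cycleGraph (n + 3)).Adj i c ∧ p c} =
      (if p (i - 1) then 1 else 0) + (if p (i + 1) then 1 else 0) := by
  have hne : i - 1 ≠ i + 1 := by
    rw [Ne, sub_eq_iff_eq_add, add_assoc, left_eq_add, Fin.ext_iff]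
    simp [Fin.val_add, Nat.mod_eq_of_lt (show 2 < n + 3 by omega)]
  have hfilter : ({c | (cycleGraph (n + 3)).Adj i c ∧ p c} : Finset _) =
      {c ∈ ({i - 1, i + 1} : Finset (Fin (n + 3))) | p c} := by
    ext c
    rw [mem_filter, mem_filter, ← mem_neighborSet, cycleGraph_neighborSet]
    simp
  rw [hfilter, filter_insert, filter_singleton]
  split_ifs <;> simp [hne]

open scoped Classical in
theorem upDegree_cycleGraph {r : Fin (n + 3) → α} (hr : StrictMono r) (i : Fin (n + 3)) :
    upDegree (cycleGraph (n + 3)) r i =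
      (if i = 0 then 1 else 0) + (if i < Fin.last (n + 2) then 1 else 0) := by
  rw [upDegree, card_filter_cycleGraph_adj]
  simp only [hr.lt_iff_lt, Fin.lt_sub_one_iff, Fin.lt_add_one_iff]

open scoped Classical in
theorem downDegree_cycleGraph {r : Fin (n + 3) → α} (hr : StrictMono r) (i : Fin (n + 3)) :
    downDegree (cycleGraph (n + 3)) r i =
      (if 0 < i then 1 else 0) + (if i = Fin.last (n + 2) then 1 else 0) := by
  rw [downDegree, card_filter_cycleGraph_adj]
  simp only [hr.lt_iff_lt, Fin.sub_one_lt_iff, Fin.add_one_lt_iff]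

end Cycle

section RowMajor

def rowMajor (m n : ℕ) : Fin m × Fin n ≃ Fin (Fintype.card (Fin m × Fin n)) :=
  finProdFinEquiv.trans (finCongr (by simp))

variable {m n : ℕ}

theorem rowMajor_lt_rowMajor_iff (x y : Fin m × Fin n) :
    rowMajor m n x < rowMajor m n y ↔ x.2.val + n * x.1.val < y.2.val + n * y.1.val := by
  simp only [rowMajor, Equiv.trans_apply, finCongr_apply, Fin.lt_def, Fin.val_cast,
    finProdFinEquiv_apply_val]

theorem strictMono_rowMajor_left (b : Fin n) :
    StrictMono fun a : Fin m => rowMajor m n (a, b) := fun _ _ h =>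
  (rowMajor_lt_rowMajor_iff _ _).2 (Nat.add_lt_add_left (Nat.mul_lt_mul_of_pos_left h b.pos) _)

theorem strictMono_rowMajor_right (a : Fin m) :
    StrictMono fun b : Fin n => rowMajor m n (a, b) := fun _ _ h =>
  (rowMajor_lt_rowMajor_iff _ _).2 (Nat.add_lt_add_right h _)

end RowMajor

theorem brushWeight_torus_rowMajor (m n : ℕ) (v : Fin (m + 3) × Fin (n + 3)) :
    brushWeight (cycleGraph (m + 3) □ cycleGraph (n + 3)) (rowMajor _ _) v =
      (if v.1 = 0 ∧ v.2 ≠ Fin.last (n + 2) then 2 else 0) +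
        (if v.2 = 0 ∧ v.1 ≠ Fin.last (m + 2) then 2 else 0) := by
  rw [brushWeight_eq_upDegree_sub_downDegree, upDegree_boxProd, downDegree_boxProd,
    upDegree_cycleGraph (strictMono_rowMajor_left v.2),
    upDegree_cycleGraph (strictMono_rowMajor_right v.1),
    downDegree_cycleGraph (strictMono_rowMajor_left v.2),
    downDegree_cycleGraph (strictMono_rowMajor_right v.1)]
  simp only [ne_eq, Fin.ext_iff, Fin.lt_def, Fin.val_last, Fin.val_zero]
  split_ifs <;> omega

theorem sum_ite_fst_eq_and_snd_ne {α β : Type*} [Fintype α] [Fintype β] [DecidableEq α]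
    [DecidableEq β] (a₀ : α) (b₀ : β) (c : ℕ) :
    ∑ v : α × β, (if v.1 = a₀ ∧ v.2 ≠ b₀ then c else 0) = (Fintype.card β - 1) * c := by
  rw [Fintype.sum_prod_type, Fintype.sum_eq_single a₀ (fun a ha => by simp [ha])]
  simp [Finset.sum_ite, Finset.filter_ne']

theorem sum_ite_snd_eq_and_fst_ne {α β : Type*} [Fintype α] [Fintype β] [DecidableEq α]
    [DecidableEq β] (a₀ : α) (b₀ : β) (c : ℕ) :
    ∑ v : α × β, (if v.2 = b₀ ∧ v.1 ≠ a₀ then c else 0) = (Fintype.card α - 1) * c := by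
  rw [Fintype.sum_prod_type_right, Fintype.sum_eq_single b₀ (fun b hb => by simp [hb])]
  simp [Finset.sum_ite, Finset.filter_ne']

/-- For all integers m, n ≥ 3, the brush number of C_m × C_n is at most 2(m + n − 2). -/
theorem brushNumber_torus_le (m n : ℕ) (hm : 3 ≤ m) (hn : 3 ≤ n) :
    brushNumber (cycleGraph m □ cycleGraph n) ≤ 2 * (m + n - 2) := by
  obtain ⟨m, rfl⟩ := Nat.exists_eq_add_of_le' hm
  obtain ⟨n, rfl⟩ := Nat.exists_eq_add_of_le' hn
  calc brushNumber (cycleGraph (m + 3) □ cycleGraph (n + 3))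
      ≤ ∑ v, brushWeight (cycleGraph (m + 3) □ cycleGraph (n + 3)) (rowMajor _ _) v :=
        brushNumber_le_sum_brushWeight _ _
    _ = ∑ v : Fin (m + 3) × Fin (n + 3), ((if v.1 = 0 ∧ v.2 ≠ Fin.last (n + 2) then 2 else 0) +
          (if v.2 = 0 ∧ v.1 ≠ Fin.last (m + 2) then 2 else 0)) :=
        Fintype.sum_congr _ _ (brushWeight_torus_rowMajor m n)
    _ = 2 * (m + 3 + (n + 3) - 2) := by
        rw [sum_add_distrib, sum_ite_fst_eq_and_snd_ne, sum_ite_snd_eq_and_fst_ne,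
          Fintype.card_fin, Fintype.card_fin]
        omega
end

section
/- For every integer n ≥ 3, the brush number of C_3 × C_n equals 2n + 2. -/
open Finset SimpleGraph

/-!
Orient `C₃ □ Cₙ` by `σ`. Every vertex has degree 4, so its weight is `2 (d⁺ - 2)`; the `k`-th
vertex (`k = 0, 1, 2`) of a triangle `C₃ × {j}` has `2 - k` later neighbours inside it, so its
weight is `2 (h - k)`, where `h` counts its later neighbours along its copy of `Cₙ`.

For the lower bound, count only the first two vertices of each triangle. For consecutive triangles
`j`, `j + 1`, the two row edges leaving their first vertices towards each other cannot both point
backwards (the two first vertices would then precede each other), which gives `n`. One more unit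
comes from the triangle whose middle vertex appears first overall: either that vertex precedes both
its row neighbours, or its earlier row neighbour is the first vertex of the adjacent triangle, and
then both row edges between the first vertices of these two triangles point forwards.

The bound `2n + 2` is attained by sweeping the triangles one after another.
-/

section Orientation

variable {V : Type} [Fintype V] (G : SimpleGraph V) (σ : V ≃ Fin (Fintype.card V))

open scoped Classical in
noncomputable def outDegree (v : V) : ℕ := #{u | G.Adj v u ∧ σ v < σ u}

open scoped Classical in
noncomputable def inDegree (v : V) : ℕ := #{u | G.Adj v u ∧ σ u < σ v}

lemma outDegree_add_inDegree [G.LocallyFinite] (v : V) :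
    outDegree G σ v + inDegree G σ v = G.degree v := by
  classical
  have : G.neighborFinset v = ({u | G.Adj v u} : Finset V) := by ext; simp
  rw [← card_neighborFinset_eq_degree, this,
    ← card_filter_add_card_filter_not (fun u => σ v < σ u), filter_filter, filter_filter,
    outDegree, inDegree]
  congr 2
  ext u
  simp only [mem_filter, mem_univ, true_and]
  refine and_congr_right fun hvu => ?_
  rw [not_lt]
  exact ⟨le_of_lt, fun h => h.lt_of_ne (σ.injective.ne hvu.ne).symm⟩

lemma brushWeight_eq_two_mul_outDegree_sub_degree [G.LocallyFinite] (v : V) :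
    brushWeight G σ v = 2 * outDegree G σ v - G.degree v := by
  have := outDegree_add_inDegree G σ v
  change outDegree G σ v - inDegree G σ v = _
  omega

lemma brushNumber_eq_of_sum_eq_of_forall_le {b : ℕ} (σ₀ : V ≃ Fin (Fintype.card V))
    (h₀ : ∑ v, brushWeight G σ₀ v = b) (h : ∀ σ, b ≤ ∑ v, brushWeight G σ v) :
    brushNumber G = b :=
  have : Nonempty (V ≃ Fin (Fintype.card V)) := ⟨σ₀⟩
  le_antisymm (h₀ ▸ ciInf_le' _ σ₀) (le_ciInf h)

end Orientation

lemma outDegree_boxProd {α β : Type} [Fintype α] [Fintype β] (G : SimpleGraph α)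
    (H : SimpleGraph β) [DecidableRel G.Adj] [DecidableRel H.Adj]
    (σ : α × β ≃ Fin (Fintype.card (α × β))) (a : α) (b : β) :
    outDegree (G □ H) σ (a, b) =
      #{a' | G.Adj a a' ∧ σ (a, b) < σ (a', b)} + #{b' | H.Adj b b' ∧ σ (a, b) < σ (a, b')} := by
  classical
  set A := ({a' | G.Adj a a' ∧ σ (a, b) < σ (a', b)} : Finset α).map
    ⟨(·, b), Prod.mk_left_injective b⟩
  set B := ({b' | H.Adj b b' ∧ σ (a, b) < σ (a, b')} : Finset β).map
    ⟨(a, ·), Prod.mk_right_injective a⟩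
  have hAB : Disjoint A B := by
    rw [Finset.disjoint_left]
    rintro _ hA hB
    simp only [A, B, mem_map, mem_filter, mem_univ, true_and, Function.Embedding.coeFn_mk] at hA hB
    obtain ⟨a', ⟨hG, -⟩, rfl⟩ := hA
    obtain ⟨b', -, h⟩ := hB
    exact hG.ne (congrArg Prod.fst h)
  have hsplit : ({u | (G □ H).Adj (a, b) u ∧ σ (a, b) < σ u} : Finset (α × β)) = A ∪ B := by
    ext ⟨a', b'⟩
    simp only [A, B, mem_filter, mem_univ, true_and, mem_union, mem_map,
      Function.Embedding.coeFn_mk, Prod.mk.injEq, boxProd_adj]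
    constructor
    · rintro ⟨⟨hG, rfl⟩ | ⟨hH, rfl⟩, hlt⟩
      · exact Or.inl ⟨a', ⟨hG, hlt⟩, rfl, rfl⟩
      · exact Or.inr ⟨b', ⟨hH, hlt⟩, rfl, rfl⟩
    · rintro (⟨a', ⟨hG, hlt⟩, rfl, rfl⟩ | ⟨b', ⟨hH, hlt⟩, rfl, rfl⟩)
      · exact ⟨Or.inl ⟨hG, rfl⟩, hlt⟩
      · exact ⟨Or.inr ⟨hH, rfl⟩, hlt⟩
  rw [outDegree, hsplit, card_union_of_disjoint hAB, card_map, card_map]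

lemma card_filter_lt_of_strictMono_comp {m : ℕ} {α : Type*} [LinearOrder α] {f : Fin m → α}
    {e : Equiv.Perm (Fin m)} (hf : StrictMono (f ∘ e)) (k : Fin m) :
    #{i | f (e k) < f i} = m - 1 - k := by
  rw [← Fin.card_Ioi, ← card_map (s := Ioi k) e.toEmbedding]
  congr 1
  ext i
  rw [mem_map_equiv, mem_Ioi, ← hf.lt_iff_lt]
  simp

lemma Fin.add_one_ne_self_of_two_le {n : ℕ} [NeZero n] (hn : 2 ≤ n) (j : Fin n) : j + 1 ≠ j :=
  add_ne_left.2 fun h => by rw [Fin.one_eq_zero_iff] at h; omega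

lemma Fin.sub_one_ne_self_of_two_le {n : ℕ} [NeZero n] (hn : 2 ≤ n) (j : Fin n) : j - 1 ≠ j :=
  fun h => by rw [sub_eq_self, Fin.one_eq_zero_iff] at h; omega

lemma card_cycleGraph_adj_filter {n : ℕ} [NeZero n] (hn : 3 ≤ n) (j : Fin n) (p : Fin n → Prop)
    [DecidablePred p] :
    #{j' | (cycleGraph n).Adj j j' ∧ p j'} =
      (if p (j + 1) then 1 else 0) + (if p (j - 1) then 1 else 0) := by
  obtain ⟨k, rfl⟩ : ∃ k, n = k + 3 := ⟨n - 3, by omega⟩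
  have hne : j + 1 ≠ j - 1 := by
    rw [Ne, ← sub_eq_zero, show j + 1 - (j - 1) = 1 + 1 by abel, Fin.ext_iff, Fin.val_add,
      Fin.val_one, Nat.mod_eq_of_lt (by omega)]
    simp
  have : ({j' | (cycleGraph (k + 3)).Adj j j' ∧ p j'} : Finset _) =
      ({j + 1, j - 1} : Finset _).filter p := by
    ext j'
    simp only [mem_filter, mem_univ, true_and, mem_insert, mem_singleton, ← mem_neighborSet,
      cycleGraph_neighborSet, Set.mem_insert_iff, Set.mem_singleton_iff, or_comm]
  rw [this, card_filter, sum_pair hne]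

section Torus

variable {n : ℕ} (σ : Fin 3 × Fin n ≃ Fin (Fintype.card (Fin 3 × Fin n)))

/- A vertex `(i, j)` lies in column `j`, the triangle `C₃ × {j}`, and in row `i`, the copy
`{i} × Cₙ` of the cycle. -/
def rowOutDegree [NeZero n] (i : Fin 3) (j : Fin n) : ℕ :=
  (if σ (i, j) < σ (i, j + 1) then 1 else 0) + (if σ (i, j) < σ (i, j - 1) then 1 else 0)

lemma degree_torus (hn : 3 ≤ n) (v : Fin 3 × Fin n) :
    (cycleGraph 3 □ cycleGraph n).degree v = 4 := by
  obtain ⟨k, rfl⟩ : ∃ k, n = k + 3 := ⟨n - 3, by omega⟩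
  rw [degree_boxProd, cycleGraph_degree_three_le, cycleGraph_degree_three_le]

variable {σ} in
lemma outDegree_torus [NeZero n] (hn : 3 ≤ n) {e : Equiv.Perm (Fin 3)} {j : Fin n}
    (he : StrictMono fun k => σ (e k, j)) (k : Fin 3) :
    outDegree (cycleGraph 3 □ cycleGraph n) σ (e k, j) = 2 - k + rowOutDegree σ (e k) j := by
  rw [outDegree_boxProd, card_cycleGraph_adj_filter hn,
    ← card_filter_lt_of_strictMono_comp (f := fun i => σ (i, j)) he k]
  congr 2
  ext i
  simp only [mem_filter, mem_univ, true_and, cycleGraph_three_eq_top, top_adj,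
    and_iff_right_iff_imp]
  rintro h rfl
  exact lt_irrefl _ h

variable {σ} in
lemma brushWeight_torus [NeZero n] (hn : 3 ≤ n) {e : Equiv.Perm (Fin 3)} {j : Fin n}
    (he : StrictMono fun k => σ (e k, j)) (k : Fin 3) :
    brushWeight (cycleGraph 3 □ cycleGraph n) σ (e k, j) = 2 * (rowOutDegree σ (e k) j - k) := by
  rw [brushWeight_eq_two_mul_outDegree_sub_degree, outDegree_torus hn he, degree_torus hn]
  have := k.isLt
  omega

noncomputable def colSort (j : Fin n) : Equiv.Perm (Fin 3) := Tuple.sort fun i => σ (i, j)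

lemma strictMono_colSort (j : Fin n) : StrictMono fun k => σ (colSort σ j k, j) :=
  Monotone.strictMono_of_injective (f := fun k => σ (colSort σ j k, j))
    (Tuple.monotone_sort fun i => σ (i, j))
    (σ.injective.comp ((Prod.mk_left_injective j).comp (colSort σ j).injective))

lemma colSort_zero_le (j : Fin n) (i : Fin 3) : σ (colSort σ j 0, j) ≤ σ (i, j) := by
  simpa using (strictMono_colSort σ j).monotone (Fin.zero_le ((colSort σ j).symm i))

lemma eq_colSort_zero_of_lt_colSort_one {j : Fin n} {i : Fin 3}
    (h : σ (i, j) < σ (colSort σ j 1, j)) : i = colSort σ j 0 := by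
  have hlt : (colSort σ j).symm i < 1 :=
    (strictMono_colSort σ j).lt_iff_lt.1 (by simpa using h)
  rw [Fin.lt_one_iff] at hlt
  rw [← hlt, Equiv.apply_symm_apply]

noncomputable def sourceOut (j j' : Fin n) : ℕ :=
  if σ (colSort σ j 0, j) < σ (colSort σ j 0, j') then 1 else 0

lemma one_le_sourceOut_add {j j' : Fin n} (hjj' : j ≠ j') :
    1 ≤ sourceOut σ j j' + sourceOut σ j' j := by
  by_contra! h
  simp only [sourceOut, Nat.lt_one_iff, Nat.add_eq_zero_iff, ite_eq_right_iff,
    one_ne_zero, imp_false, not_lt] at h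
  have h₁ := h.1.lt_of_ne (σ.injective.ne (by simp [hjj'.symm]))
  have h₂ := h.2.lt_of_ne (σ.injective.ne (by simp [hjj']))
  exact lt_irrefl _ <|
    calc σ (colSort σ j' 0, j') ≤ σ (colSort σ j 0, j') := colSort_zero_le σ j' _
      _ < σ (colSort σ j 0, j) := h₁
      _ ≤ σ (colSort σ j' 0, j) := colSort_zero_le σ j _
      _ < σ (colSort σ j' 0, j') := h₂

lemma sourceOut_add_eq_two {j j' : Fin n}
    (hmid : σ (colSort σ j 1, j) ≤ σ (colSort σ j' 1, j'))
    (hlt : σ (colSort σ j 1, j') < σ (colSort σ j 1, j)) :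
    sourceOut σ j j' + sourceOut σ j' j = 2 := by
  have hsrc : colSort σ j 1 = colSort σ j' 0 :=
    eq_colSort_zero_of_lt_colSort_one σ (hlt.trans_le hmid)
  have hne : colSort σ j 0 ≠ colSort σ j' 0 :=
    hsrc ▸ (colSort σ j).injective.ne (by decide)
  have h₁ : σ (colSort σ j 0, j) < σ (colSort σ j 0, j') :=
    calc σ (colSort σ j 0, j) < σ (colSort σ j 1, j) := strictMono_colSort σ j (by decide)
      _ ≤ σ (colSort σ j' 1, j') := hmid
      _ ≤ σ (colSort σ j 0, j') :=
        not_lt.1 fun h => hne (eq_colSort_zero_of_lt_colSort_one σ h)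
  rw [sourceOut, sourceOut, if_pos h₁, ← hsrc, if_pos hlt]

/- Summed over `j`, twice this is the weight of the first two vertices of all columns:
`sourceOut σ (j + 1) j` is `sourceOut σ j (j - 1)` shifted by one column. -/
noncomputable def columnGain [NeZero n] (j : Fin n) : ℕ :=
  sourceOut σ j (j + 1) + sourceOut σ (j + 1) j + (rowOutDegree σ (colSort σ j 1) j - 1)

lemma one_le_columnGain [NeZero n] (hn : 3 ≤ n) (j : Fin n) : 1 ≤ columnGain σ j :=
  (one_le_sourceOut_add σ (Fin.add_one_ne_self_of_two_le (by omega) j).symm).trans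
    (Nat.le_add_right _ _)

lemma exists_two_le_columnGain [NeZero n] (hn : 3 ≤ n) : ∃ j, 2 ≤ columnGain σ j := by
  obtain ⟨j₀, -, hmin⟩ := exists_min_image univ (fun j => σ (colSort σ j 1, j)) univ_nonempty
  have hne : ∀ j : Fin n, j ≠ j₀ → σ (colSort σ j₀ 1, j₀) ≠ σ (colSort σ j₀ 1, j) :=
    fun j hj => σ.injective.ne (by simp [hj.symm])
  rcases (hne _ (Fin.add_one_ne_self_of_two_le (by omega) j₀)).lt_or_gt with hsucc | hsucc
  · rcases (hne _ (Fin.sub_one_ne_self_of_two_le (by omega) j₀)).lt_or_gt with hpred | hpred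
    · refine ⟨j₀, ?_⟩
      have h₁ : rowOutDegree σ (colSort σ j₀ 1) j₀ = 2 := by
        rw [rowOutDegree, if_pos hsucc, if_pos hpred]
      have h₂ := one_le_sourceOut_add σ (Fin.add_one_ne_self_of_two_le (by omega) j₀).symm
      rw [columnGain]
      omega
    · refine ⟨j₀ - 1, ?_⟩
      have := sourceOut_add_eq_two σ (hmin _ (mem_univ _)) hpred
      rw [columnGain, sub_add_cancel]
      omega
  · refine ⟨j₀, ?_⟩
    have := sourceOut_add_eq_two σ (hmin _ (mem_univ _)) hsucc
    rw [columnGain]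
    omega

lemma le_sum_brushWeight_torus [NeZero n] (hn : 3 ≤ n) :
    2 * n + 2 ≤ ∑ v, brushWeight (cycleGraph 3 □ cycleGraph n) σ v := by
  set T := cycleGraph 3 □ cycleGraph n
  have hsource : ∀ j, brushWeight T σ (colSort σ j 0, j) =
      2 * (sourceOut σ j (j + 1) + sourceOut σ j (j - 1)) :=
    fun j => brushWeight_torus hn (strictMono_colSort σ j) 0
  have hmiddle : ∀ j, brushWeight T σ (colSort σ j 1, j) =
      2 * (rowOutDegree σ (colSort σ j 1) j - 1) :=
    fun j => brushWeight_torus hn (strictMono_colSort σ j) 1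
  have hshift : ∑ j, sourceOut σ j (j - 1) = ∑ j, sourceOut σ (j + 1) j :=
    (Fintype.sum_equiv (Equiv.addRight 1) _ _ fun j => by simp).symm
  obtain ⟨j₂, hj₂⟩ := exists_two_le_columnGain σ hn
  have hcount : n < ∑ j, columnGain σ j := by
    simpa using sum_lt_sum (s := univ) (f := fun _ => 1) (g := columnGain σ)
      (fun j _ => one_le_columnGain σ hn j) ⟨j₂, mem_univ _, hj₂⟩
  calc 2 * n + 2
      ≤ 2 * ∑ j, columnGain σ j := by omega
    _ = ∑ j, (brushWeight T σ (colSort σ j 0, j) + brushWeight T σ (colSort σ j 1, j)) := by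
      simp only [columnGain, hsource, hmiddle, sum_add_distrib, ← mul_sum, hshift]
      ring
    _ ≤ ∑ j, ∑ k, brushWeight T σ (colSort σ j k, j) :=
      sum_le_sum fun j _ => by simp [Fin.sum_univ_three]
    _ = ∑ v, brushWeight T σ v := by
      rw [Fintype.sum_prod_type_right]
      exact sum_congr rfl fun j _ => Equiv.sum_comp (colSort σ j) (fun i => brushWeight T σ (i, j))

end Torus

def columnSweep (n : ℕ) : Fin 3 × Fin n ≃ Fin (Fintype.card (Fin 3 × Fin n)) :=
  (Equiv.prodComm _ _).trans (finProdFinEquiv.trans (finCongr (by simp [mul_comm])))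

lemma columnSweep_val {n : ℕ} (i : Fin 3) (j : Fin n) :
    (columnSweep n (i, j) : ℕ) = i + 3 * j :=
  rfl

lemma strictMono_columnSweep {n : ℕ} (j : Fin n) : StrictMono fun i => columnSweep n (i, j) :=
  fun i i' h => by
    rw [Fin.lt_def, columnSweep_val, columnSweep_val]
    exact Nat.add_lt_add_right h _

lemma columnSweep_lt_columnSweep_iff {n : ℕ} {i : Fin 3} {j j' : Fin n} :
    columnSweep n (i, j) < columnSweep n (i, j') ↔ j < j' := by
  rw [Fin.lt_def, columnSweep_val, columnSweep_val, Fin.lt_def]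
  omega

lemma sum_brushWeight_columnSweep {n : ℕ} [NeZero n] (hn : 3 ≤ n) :
    ∑ v, brushWeight (cycleGraph 3 □ cycleGraph n) (columnSweep n) v = 2 * n + 2 := by
  obtain ⟨k, rfl⟩ : ∃ k, n = k + 3 := ⟨n - 3, by omega⟩
  have hcol : ∀ j : Fin (k + 3),
      ∑ i, brushWeight (cycleGraph 3 □ cycleGraph (k + 3)) (columnSweep (k + 3)) (i, j) =
        2 * (if j ≠ Fin.last _ then 1 else 0) + 4 * (if j = 0 then 1 else 0) := by
    intro j
    have hw := brushWeight_torus hn (e := Equiv.refl _) (strictMono_columnSweep j)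
    simp only [Equiv.refl_apply, rowOutDegree, columnSweep_lt_columnSweep_iff, Fin.lt_add_one_iff,
      Fin.lt_last_iff_ne_last, Fin.lt_sub_one_iff] at hw
    rw [Fin.sum_univ_three, hw, hw, hw]
    obtain rfl | h0 := eq_or_ne j 0
    · rw [if_pos rfl, if_pos (Fin.last_pos' (n := k + 2)).ne]
      rfl
    · rw [if_neg h0]
      split_ifs <;> rfl
  rw [Fintype.sum_prod_type_right, sum_congr rfl fun j _ => hcol j, sum_add_distrib, ← mul_sum,
    ← mul_sum, sum_boole, sum_boole, filter_ne', filter_eq']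
  simp only [mem_univ, if_true, card_erase_of_mem, card_univ, Fintype.card_fin, card_singleton,
    Nat.cast_id]
  omega

/-- For every integer n ≥ 3, the brush number of C_3 × C_n equals 2n + 2. -/
theorem brushNumber_C3_torus (n : ℕ) (hn : 3 ≤ n) :
    brushNumber (cycleGraph 3 □ cycleGraph n) = 2 * n + 2 := by
  have : NeZero n := ⟨by omega⟩
  exact brushNumber_eq_of_sum_eq_of_forall_le _ (columnSweep n) (sum_brushWeight_columnSweep hn)
    fun σ => le_sum_brushWeight_torus σ hn
end

section
/- For all integers m ≥ 4 and n ≥ 3, the brush number of C_m × C_n is at least the brush number of C_{m−1} × C_n. -/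
open Finset SimpleGraph

section Aux

/-- Any injective map into a linear order induces an ordering equiv with the same comparisons. -/
lemma exists_order_equiv {V : Type} [Fintype V] {β : Type} [LinearOrder β]
    (f : V → β) (hf : Function.Injective f) :
    ∃ σ : V ≃ Fin (Fintype.card V), ∀ x y, σ x < σ y ↔ f x < f y := by
  letI : LinearOrder V := LinearOrder.lift' f hf
  refine ⟨(monoEquivOfFin V rfl).symm.toEquiv, fun x y => ?_⟩
  have h1 : (monoEquivOfFin V rfl).symm x < (monoEquivOfFin V rfl).symm y ↔ x < y :=
    (monoEquivOfFin V rfl).symm.lt_iff_lt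
  have h2 : x < y ↔ f x < f y := Iff.rfl
  exact h1.trans h2

lemma cycle_adj {M : ℕ} (a b : Fin (M + 2)) :
    (cycleGraph (M + 2)).Adj a b ↔ b = a - 1 ∨ b = a + 1 := by
  rw [cycleGraph_adj, sub_eq_iff_eq_add', sub_eq_iff_eq_add']
  have h : a = b + 1 ↔ b = a - 1 := by
    rw [eq_sub_iff_add_eq, eq_comm]
  rw [h]

lemma fin_add_one_ne {M : ℕ} (x : Fin (M + 2)) : x + 1 ≠ x := by
  intro h
  have h1 : (1 : Fin (M + 2)) = 0 := by
    have := add_left_cancel (a := x) (b := (1 : Fin (M + 2))) (c := 0) (by simpa using h)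
    exact this
  simp [Fin.ext_iff] at h1

lemma fin_sub_one_ne {M : ℕ} (x : Fin (M + 2)) : x - 1 ≠ x := by
  intro h
  rw [sub_eq_iff_eq_add] at h
  exact fin_add_one_ne x h.symm

lemma fin_sub_one_ne_add_one {M : ℕ} (x : Fin (M + 3)) : x - 1 ≠ x + 1 := by
  intro h
  rw [sub_eq_iff_eq_add] at h
  have h2 : x + (1 + 1) = x + 0 := by
    rw [add_zero, ← add_assoc]
    exact h.symm
  have h3 : (1 + 1 : Fin (M + 3)) = 0 := add_left_cancel h2
  have h4 : ((1 + 1 : Fin (M + 3)) : ℕ) = 2 := by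
    rw [Fin.val_add]
    simp [Nat.mod_eq_of_lt]
  rw [h3] at h4
  simp at h4

lemma torus_adj {M N : ℕ} (v u : Fin (M + 2) × Fin (N + 2)) :
    (cycleGraph (M + 2) □ cycleGraph (N + 2)).Adj v u ↔
      u = (v.1 - 1, v.2) ∨ u = (v.1 + 1, v.2) ∨ u = (v.1, v.2 - 1) ∨ u = (v.1, v.2 + 1) := by
  rw [boxProd_adj, cycle_adj, cycle_adj]
  constructor
  · rintro (⟨h1 | h1, h2⟩ | ⟨h1 | h1, h2⟩)
    · left; exact Prod.ext h1 h2.symm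
    · right; left; exact Prod.ext h1 h2.symm
    · right; right; left; exact Prod.ext h2.symm h1
    · right; right; right; exact Prod.ext h2.symm h1
  · rintro (h | h | h | h) <;> subst h
    · exact Or.inl ⟨Or.inl rfl, rfl⟩
    · exact Or.inl ⟨Or.inr rfl, rfl⟩
    · exact Or.inr ⟨Or.inl rfl, rfl⟩
    · exact Or.inr ⟨Or.inr rfl, rfl⟩

lemma card_filter_four {V : Type} [Fintype V] [DecidableEq V]
    (q : V → Prop) [DecidablePred q] (P : V → Prop) [DecidablePred P]
    (n1 n2 n3 n4 : V)
    (hq : ∀ u, q u ↔ (u = n1 ∨ u = n2 ∨ u = n3 ∨ u = n4) ∧ P u)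
    (h12 : n1 ≠ n2) (h13 : n1 ≠ n3) (h14 : n1 ≠ n4)
    (h23 : n2 ≠ n3) (h24 : n2 ≠ n4) (h34 : n3 ≠ n4) :
    (Finset.univ.filter q).card =
      (if P n1 then 1 else 0) + ((if P n2 then 1 else 0)
        + ((if P n3 then 1 else 0) + (if P n4 then 1 else 0))) := by
  have h : Finset.univ.filter q = ({n1, n2, n3, n4} : Finset V).filter P := by
    ext u
    simp only [Finset.mem_filter, Finset.mem_univ, true_and, Finset.mem_insert,
      Finset.mem_singleton, hq]
  rw [h, Finset.card_filter]
  rw [Finset.sum_insert (by simp [h12, h13, h14]),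
    Finset.sum_insert (by simp [h23, h24]),
    Finset.sum_insert (by simp [h34]), Finset.sum_singleton]


/-- explicit indicator form of the brush weight on a torus -/
def torusW {M N : ℕ} (f : Fin (M+3) × Fin (N+3) → ℕ) (v : Fin (M+3) × Fin (N+3)) : ℕ :=
  ((if f v < f (v.1 - 1, v.2) then 1 else 0) + ((if f v < f (v.1 + 1, v.2) then 1 else 0)
    + ((if f v < f (v.1, v.2 - 1) then 1 else 0) + (if f v < f (v.1, v.2 + 1) then 1 else 0))))
  - ((if f (v.1 - 1, v.2) < f v then 1 else 0) + ((if f (v.1 + 1, v.2) < f v then 1 else 0)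
    + ((if f (v.1, v.2 - 1) < f v then 1 else 0) + (if f (v.1, v.2 + 1) < f v then 1 else 0))))

lemma torusW_mono {M N M' N' : ℕ} (f : Fin (M+3) × Fin (N+3) → ℕ) (g : Fin (M'+3) × Fin (N'+3) → ℕ)
    (v : Fin (M+3) × Fin (N+3)) (w : Fin (M'+3) × Fin (N'+3))
    (hx : f v = g w)
    (hn1 : f (v.1 - 1, v.2) ≠ f v) (hn2 : f (v.1 + 1, v.2) ≠ f v)
    (hn3 : f (v.1, v.2 - 1) ≠ f v) (hn4 : f (v.1, v.2 + 1) ≠ f v)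
    (h1 : f (v.1 - 1, v.2) ≤ g (w.1 - 1, w.2) ∨ g w < g (w.1 - 1, w.2))
    (h2 : f (v.1 + 1, v.2) ≤ g (w.1 + 1, w.2) ∨ g w < g (w.1 + 1, w.2))
    (h3 : f (v.1, v.2 - 1) ≤ g (w.1, w.2 - 1) ∨ g w < g (w.1, w.2 - 1))
    (h4 : f (v.1, v.2 + 1) ≤ g (w.1, w.2 + 1) ∨ g w < g (w.1, w.2 + 1)) :
    torusW f v ≤ torusW g w := by
  unfold torusW
  rw [hx] at hn1 hn2 hn3 hn4 ⊢
  set x := g w with hxdef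
  set y1 := f (v.1 - 1, v.2)
  set y2 := f (v.1 + 1, v.2)
  set y3 := f (v.1, v.2 - 1)
  set y4 := f (v.1, v.2 + 1)
  set Y1 := g (w.1 - 1, w.2)
  set Y2 := g (w.1 + 1, w.2)
  set Y3 := g (w.1, w.2 - 1)
  set Y4 := g (w.1, w.2 + 1)
  have A1 : (if x < y1 then 1 else 0) ≤ (if x < Y1 then 1 else 0) := by
    rcases h1 with h | h <;> split_ifs <;> omega
  have A2 : (if x < y2 then 1 else 0) ≤ (if x < Y2 then 1 else 0) := by
    rcases h2 with h | h <;> split_ifs <;> omega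
  have A3 : (if x < y3 then 1 else 0) ≤ (if x < Y3 then 1 else 0) := by
    rcases h3 with h | h <;> split_ifs <;> omega
  have A4 : (if x < y4 then 1 else 0) ≤ (if x < Y4 then 1 else 0) := by
    rcases h4 with h | h <;> split_ifs <;> omega
  have B1 : (if x < y1 then 1 else 0) + (if y1 < x then 1 else 0) = 1 := by
    split_ifs <;> omega
  have B2 : (if x < y2 then 1 else 0) + (if y2 < x then 1 else 0) = 1 := by
    split_ifs <;> omega
  have B3 : (if x < y3 then 1 else 0) + (if y3 < x then 1 else 0) = 1 := by
    split_ifs <;> omega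
  have B4 : (if x < y4 then 1 else 0) + (if y4 < x then 1 else 0) = 1 := by
    split_ifs <;> omega
  have C1 : (if x < Y1 then 1 else 0) + (if Y1 < x then 1 else 0) ≤ 1 := by
    split_ifs <;> omega
  have C2 : (if x < Y2 then 1 else 0) + (if Y2 < x then 1 else 0) ≤ 1 := by
    split_ifs <;> omega
  have C3 : (if x < Y3 then 1 else 0) + (if Y3 < x then 1 else 0) ≤ 1 := by
    split_ifs <;> omega
  have C4 : (if x < Y4 then 1 else 0) + (if Y4 < x then 1 else 0) ≤ 1 := by
    split_ifs <;> omega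
  set o1 := (if x < y1 then 1 else 0)
  set o2 := (if x < y2 then 1 else 0)
  set o3 := (if x < y3 then 1 else 0)
  set o4 := (if x < y4 then 1 else 0)
  set i1 := (if y1 < x then 1 else 0)
  set i2 := (if y2 < x then 1 else 0)
  set i3 := (if y3 < x then 1 else 0)
  set i4 := (if y4 < x then 1 else 0)
  set O1 := (if x < Y1 then 1 else 0)
  set O2 := (if x < Y2 then 1 else 0)
  set O3 := (if x < Y3 then 1 else 0)
  set O4 := (if x < Y4 then 1 else 0)
  set I1 := (if Y1 < x then 1 else 0)
  set I2 := (if Y2 < x then 1 else 0)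
  set I3 := (if Y3 < x then 1 else 0)
  set I4 := (if Y4 < x then 1 else 0)
  omega

open scoped Classical in
lemma brushWeight_torus_s4 {M N : ℕ}
    (σ : (Fin (M + 3) × Fin (N + 3)) ≃ Fin (Fintype.card (Fin (M + 3) × Fin (N + 3))))
    (f : Fin (M + 3) × Fin (N + 3) → ℕ)
    (hf : ∀ x y, σ x < σ y ↔ f x < f y) (v : Fin (M + 3) × Fin (N + 3)) :
    brushWeight (cycleGraph (M + 3) □ cycleGraph (N + 3)) σ v = torusW f v := by
  unfold torusW
  have hd12 : ((v.1 - 1, v.2) : Fin (M + 3) × Fin (N + 3)) ≠ (v.1 + 1, v.2) :=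
    fun h => fin_sub_one_ne_add_one v.1 (congrArg Prod.fst h)
  have hd13 : ((v.1 - 1, v.2) : Fin (M + 3) × Fin (N + 3)) ≠ (v.1, v.2 - 1) :=
    fun h => fin_sub_one_ne v.1 (congrArg Prod.fst h)
  have hd14 : ((v.1 - 1, v.2) : Fin (M + 3) × Fin (N + 3)) ≠ (v.1, v.2 + 1) :=
    fun h => fin_sub_one_ne v.1 (congrArg Prod.fst h)
  have hd23 : ((v.1 + 1, v.2) : Fin (M + 3) × Fin (N + 3)) ≠ (v.1, v.2 - 1) :=
    fun h => fin_add_one_ne v.1 (congrArg Prod.fst h)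
  have hd24 : ((v.1 + 1, v.2) : Fin (M + 3) × Fin (N + 3)) ≠ (v.1, v.2 + 1) :=
    fun h => fin_add_one_ne v.1 (congrArg Prod.fst h)
  have hd34 : ((v.1, v.2 - 1) : Fin (M + 3) × Fin (N + 3)) ≠ (v.1, v.2 + 1) :=
    fun h => fin_sub_one_ne_add_one v.2 (congrArg Prod.snd h)
  have hAdj : ∀ u, (cycleGraph (M + 3) □ cycleGraph (N + 3)).Adj v u ↔
      u = (v.1 - 1, v.2) ∨ u = (v.1 + 1, v.2) ∨ u = (v.1, v.2 - 1) ∨ u = (v.1, v.2 + 1) :=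
    fun u => torus_adj (M := M + 1) (N := N + 1) v u
  rw [brushWeight]
  rw [card_filter_four (fun u => (cycleGraph (M + 3) □ cycleGraph (N + 3)).Adj v u ∧ σ v < σ u)
      (fun u => f v < f u) _ _ _ _
      (fun u => by simp only [hAdj, hf])
      hd12 hd13 hd14 hd23 hd24 hd34,
    card_filter_four (fun u => (cycleGraph (M + 3) □ cycleGraph (N + 3)).Adj v u ∧ σ u < σ v)
      (fun u => f u < f v) _ _ _ _
      (fun u => by simp only [hAdj, hf])
      hd12 hd13 hd14 hd23 hd24 hd34]

end Aux

-- ====== the contraction machinery ======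

/-- the distinguished (merged) row -/
def mrow (k : ℕ) : Fin (k + 3) := ⟨k + 2, by omega⟩

/-- second row embedding: the merged row also represents the last old row -/
def rowE (k : ℕ) (i : Fin (k + 3)) : Fin (k + 4) :=
  if i = mrow k then Fin.last (k + 3) else Fin.castSucc i

/-- the key function used to order the contracted torus -/
def keyfun (k p : ℕ) (s : Fin (k + 4) × Fin (p + 3) → ℕ)
    (q : Fin (k + 3) × Fin (p + 3)) : ℕ :=
  min (s (Fin.castSucc q.1, q.2)) (s (rowE k q.1, q.2))

lemma keyfun_le1 (k p : ℕ) (s : Fin (k + 4) × Fin (p + 3) → ℕ)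
    (a : Fin (k + 3)) (b : Fin (p + 3)) :
    keyfun k p s (a, b) ≤ s (Fin.castSucc a, b) := min_le_left _ _

lemma keyfun_le2 (k p : ℕ) (s : Fin (k + 4) × Fin (p + 3) → ℕ)
    (a : Fin (k + 3)) (b : Fin (p + 3)) :
    keyfun k p s (a, b) ≤ s (rowE k a, b) := min_le_right _ _

lemma rowE_eq (k : ℕ) (a : Fin (k + 3)) (ha : a ≠ mrow k) :
    rowE k a = Fin.castSucc a := if_neg ha

lemma rowE_mrow (k : ℕ) : rowE k (mrow k) = Fin.last (k + 3) := if_pos rfl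

lemma keyfun_eq (k p : ℕ) (s : Fin (k + 4) × Fin (p + 3) → ℕ)
    (a : Fin (k + 3)) (b : Fin (p + 3)) (ha : a ≠ mrow k) :
    keyfun k p s (a, b) = s (Fin.castSucc a, b) := by
  unfold keyfun
  rw [rowE_eq k a ha]
  exact min_self _

lemma row_resolve (k : ℕ) (i i' : Fin (k + 3))
    (h : Fin.castSucc i = Fin.castSucc i' ∨ Fin.castSucc i = rowE k i' ∨
      rowE k i = Fin.castSucc i' ∨ rowE k i = rowE k i') : i = i' := by
  have hi : i.val < k + 3 := i.isLt
  have hi' : i'.val < k + 3 := i'.isLt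
  unfold rowE mrow at h
  rcases h with h | h | h | h
  · exact Fin.castSucc_injective _ h
  · split_ifs at h with h1
    · simp only [Fin.ext_iff, Fin.coe_castSucc, Fin.val_last] at h
      omega
    · exact Fin.castSucc_injective _ h
  · split_ifs at h with h1
    · simp only [Fin.ext_iff, Fin.coe_castSucc, Fin.val_last] at h
      omega
    · exact Fin.castSucc_injective _ h
  · split_ifs at h with h1 h2 h2
    · rw [h1, h2]
    · simp only [Fin.ext_iff, Fin.coe_castSucc, Fin.val_last] at h
      omega
    · simp only [Fin.ext_iff, Fin.coe_castSucc, Fin.val_last] at h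
      omega
    · exact Fin.castSucc_injective _ h

lemma keyfun_inj (k p : ℕ) (s : Fin (k + 4) × Fin (p + 3) → ℕ)
    (hsinj : Function.Injective s) : Function.Injective (keyfun k p s) := by
  rintro ⟨i, j⟩ ⟨i', j'⟩ h
  have hmin : ∀ (a : Fin (k + 3)) (b : Fin (p + 3)),
      keyfun k p s (a, b) = s (Fin.castSucc a, b) ∨ keyfun k p s (a, b) = s (rowE k a, b) :=
    fun a b => min_choice _ _
  rcases hmin i j with h1 | h1 <;> rcases hmin i' j' with h2 | h2 <;> rw [h1, h2] at h <;>
  · have h' := hsinj h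
    rw [Prod.mk.injEq] at h'
    obtain ⟨hr, hc⟩ := h'
    subst hc
    rw [row_resolve k i i' (by tauto)]

-- ====== row arithmetic facts ======

lemma row_fact_sub (k : ℕ) (i : Fin (k + 3)) :
    Fin.castSucc i - 1 = Fin.castSucc (i - 1) ∨ Fin.castSucc i - 1 = rowE k (i - 1) := by
  by_cases h0 : i.val = 0
  · right
    have hi1 : i - 1 = mrow k := by
      simp only [Fin.ext_iff, Fin.coe_sub_one, h0, mrow]
      simp [Fin.ext_iff, h0]
    rw [hi1, rowE_mrow]
    simp only [Fin.ext_iff, Fin.coe_sub_one, Fin.val_last, Fin.coe_castSucc]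
    have : Fin.castSucc i = 0 := by
      simp [Fin.ext_iff, h0]
    simp [this, h0]
  · left
    simp only [Fin.ext_iff, Fin.coe_sub_one, Fin.coe_castSucc]
    have h1 : ¬ (Fin.castSucc i = (0 : Fin (k + 4))) := by
      simp [Fin.ext_iff, h0]
    have h2 : ¬ (i = (0 : Fin (k + 3))) := by
      simp [Fin.ext_iff, h0]
    simp [h0, h1, h2, Fin.coe_sub_one]

lemma row_fact_add (k : ℕ) (i : Fin (k + 3)) (hi : i ≠ mrow k) :
    Fin.castSucc i + 1 = Fin.castSucc (i + 1) := by
  have hne : i.val ≠ k + 2 := by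
    intro h
    apply hi
    apply Fin.ext
    simp [mrow, h]
  have hlt : i.val < k + 2 := by
    have := i.isLt
    omega
  simp only [Fin.ext_iff, Fin.val_add_one, Fin.coe_castSucc]
  have h1 : ¬ (Fin.castSucc i = Fin.last (k + 3)) := by
    simp only [Fin.ext_iff, Fin.coe_castSucc, Fin.val_last]
    omega
  have h2 : ¬ (i = Fin.last (k + 2)) := by
    simp only [Fin.ext_iff, Fin.val_last]
    omega
  have c1 : (i : ℕ) ≠ k + 3 := by omega
  have c2 : (i : ℕ) ≠ k + 2 := hne
  simp [h1, h2, Fin.val_add_one, c1, c2]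

lemma mrow_fact_sub (k : ℕ) :
    Fin.castSucc (mrow k) - 1 = Fin.castSucc (mrow k - 1) := by
  simp only [Fin.ext_iff, Fin.coe_sub_one, Fin.coe_castSucc, mrow]
  have h1 : ¬ ((⟨k + 2, by omega⟩ : Fin (k + 3)).castSucc = (0 : Fin (k + 4))) := by
    simp [Fin.ext_iff]
  have h2 : ¬ ((⟨k + 2, by omega⟩ : Fin (k + 3)) = 0) := by
    simp [Fin.ext_iff]
  simp [h1, h2, Fin.coe_sub_one]

lemma mrow_fact_add (k : ℕ) :
    Fin.castSucc (mrow k) + 1 = Fin.last (k + 3) := by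
  simp only [Fin.ext_iff, Fin.val_add_one, Fin.coe_castSucc, Fin.val_last, mrow]
  have h1 : ¬ ((⟨k + 2, by omega⟩ : Fin (k + 3)).castSucc = Fin.last (k + 3)) := by
    simp [Fin.ext_iff]
  simp [h1]

lemma last_fact_sub (k : ℕ) :
    Fin.last (k + 3) - 1 = Fin.castSucc (mrow k) := by
  simp only [Fin.ext_iff, Fin.coe_sub_one, Fin.coe_castSucc, Fin.val_last, mrow]
  have h1 : ¬ (Fin.last (k + 3) = (0 : Fin (k + 4))) := by
    simp [Fin.ext_iff]
  simp [h1]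

lemma last_fact_add (k : ℕ) :
    Fin.last (k + 3) + 1 = Fin.castSucc (mrow k + 1) := by
  simp only [Fin.ext_iff, Fin.val_add_one, Fin.coe_castSucc, Fin.val_last, mrow]
  have h2 : (⟨k + 2, by omega⟩ : Fin (k + 3)) = Fin.last (k + 2) := by
    simp [Fin.ext_iff]
  simp [h2, Fin.val_add_one]

-- ====== the pointwise inequality ======

lemma pointwise (k p : ℕ) (s : Fin (k + 4) × Fin (p + 3) → ℕ)
    (hsinj : Function.Injective s) (i : Fin (k + 3)) (j : Fin (p + 3)) :
    torusW (keyfun k p s) (i, j) ≤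
      torusW (M := k + 1) s (Fin.castSucc i, j) +
        (if i = mrow k then torusW (M := k + 1) s (Fin.last (k + 3), j) else 0) := by
  have hκinj := keyfun_inj k p s hsinj
  set κ := keyfun k p s with hκ
  have hne1 : κ (i - 1, j) ≠ κ (i, j) :=
    fun h => fin_sub_one_ne i (congrArg Prod.fst (hκinj h))
  have hne2 : κ (i + 1, j) ≠ κ (i, j) :=
    fun h => fin_add_one_ne i (congrArg Prod.fst (hκinj h))
  have hne3 : κ (i, j - 1) ≠ κ (i, j) :=
    fun h => fin_sub_one_ne j (congrArg Prod.snd (hκinj h))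
  have hne4 : κ (i, j + 1) ≠ κ (i, j) :=
    fun h => fin_add_one_ne j (congrArg Prod.snd (hκinj h))
  by_cases hi : i = mrow k
  · subst hi
    rw [if_pos rfl]
    -- merged row
    have hbc : s (Fin.castSucc (mrow k), j) ≠ s (Fin.last (k + 3), j) := by
      apply hsinj.ne
      intro h
      have := congrArg Prod.fst h
      simp only [Fin.ext_iff, Fin.coe_castSucc, Fin.val_last, mrow] at this
      omega
    have hκval : κ (mrow k, j) =
        min (s (Fin.castSucc (mrow k), j)) (s (Fin.last (k + 3), j)) := by
      rw [hκ]
      unfold keyfun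
      rw [rowE_mrow]
    rcases lt_or_gt_of_ne hbc with hlt | hgt
    · -- the min is the castSucc row vertex b
      refine le_trans (torusW_mono κ s (mrow k, j) (Fin.castSucc (mrow k), j) ?_
        hne1 hne2 hne3 hne4 ?_ ?_ ?_ ?_) (Nat.le_add_right _ _)
      · rw [hκval]
        exact min_eq_left (le_of_lt hlt)
      · left
        simp only
        rw [mrow_fact_sub k]
        exact keyfun_le1 k p s _ _
      · right
        simp only
        rw [mrow_fact_add k]
        exact hlt
      · left
        exact keyfun_le1 k p s _ _
      · left
        exact keyfun_le1 k p s _ _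
    · -- the min is the last row vertex c
      refine le_trans (torusW_mono κ s (mrow k, j) (Fin.last (k + 3), j) ?_
        hne1 hne2 hne3 hne4 ?_ ?_ ?_ ?_) (Nat.le_add_left _ _)
      · rw [hκval]
        exact min_eq_right (le_of_lt hgt)
      · right
        simp only
        rw [last_fact_sub k]
        exact hgt
      · left
        simp only
        rw [last_fact_add k]
        exact keyfun_le1 k p s _ _
      · left
        have := keyfun_le2 k p s (mrow k) (j - 1)
        rwa [rowE_mrow] at this
      · left
        have := keyfun_le2 k p s (mrow k) (j + 1)
        rwa [rowE_mrow] at this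
  · rw [if_neg hi, add_zero]
    refine torusW_mono κ s (i, j) (Fin.castSucc i, j) (keyfun_eq k p s i j hi)
      hne1 hne2 hne3 hne4 ?_ ?_ ?_ ?_
    · left
      simp only
      rcases row_fact_sub k i with h | h
      · rw [h]; exact keyfun_le1 k p s _ _
      · rw [h]; exact keyfun_le2 k p s _ _
    · left
      simp only
      rw [row_fact_add k i hi]
      exact keyfun_le1 k p s _ _
    · left
      exact keyfun_le1 k p s _ _
    · left
      exact keyfun_le1 k p s _ _


/-- For all integers m ≥ 4 and n ≥ 3, the brush number of C_m × C_n is at least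
the brush number of C_{m−1} × C_n. -/
theorem brushNumber_torus_mono (m n : ℕ) (hm : 4 ≤ m) (hn : 3 ≤ n) :
    brushNumber (cycleGraph (m - 1) □ cycleGraph n) ≤
      brushNumber (cycleGraph m □ cycleGraph n) := by
  obtain ⟨k, rfl⟩ : ∃ k, m = k + 4 := ⟨m - 4, by omega⟩
  obtain ⟨p, rfl⟩ : ∃ p, n = p + 3 := ⟨n - 3, by omega⟩
  have hsub : k + 4 - 1 = k + 3 := by omega
  rw [hsub, brushNumber, brushNumber]
  have hnonempty : Nonempty ((Fin (k + 4) × Fin (p + 3)) ≃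
      Fin (Fintype.card (Fin (k + 4) × Fin (p + 3)))) := ⟨Fintype.equivFin _⟩
  refine le_ciInf fun σ => ?_
  set s : Fin (k + 4) × Fin (p + 3) → ℕ := fun v => (σ v : ℕ) with hs_def
  have hs : ∀ x y, σ x < σ y ↔ s x < s y := fun x y => Iff.rfl
  have hsinj : Function.Injective s := fun x y h => σ.injective (Fin.val_injective h)
  obtain ⟨τ, hτ⟩ := exists_order_equiv (keyfun k p s) (keyfun_inj k p s hsinj)
  refine le_trans (ciInf_le' _ τ) ?_
  have hL : ∑ v, brushWeight (cycleGraph (k + 3) □ cycleGraph (p + 3)) τ v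
      = ∑ v, torusW (keyfun k p s) v :=
    Finset.sum_congr rfl fun v _ => brushWeight_torus_s4 (M := k) (N := p) τ _ hτ v
  have hR : ∑ v, brushWeight (cycleGraph (k + 4) □ cycleGraph (p + 3)) σ v
      = ∑ v, torusW (M := k + 1) (N := p) s v :=
    Finset.sum_congr rfl fun v _ => brushWeight_torus_s4 (M := k + 1) (N := p) σ s hs v
  rw [hL, hR]
  rw [Fintype.sum_prod_type, Fintype.sum_prod_type]
  have hsplit : (∑ i : Fin (k + 4), ∑ j : Fin (p + 3), torusW (M := k + 1) (N := p) s (i, j))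
      = (∑ i : Fin (k + 3), ∑ j : Fin (p + 3),
          torusW (M := k + 1) (N := p) s (Fin.castSucc i, j))
        + ∑ j : Fin (p + 3), torusW (M := k + 1) (N := p) s (Fin.last (k + 3), j) :=
    Fin.sum_univ_castSucc (n := k + 3) _
  rw [hsplit]
  calc ∑ i : Fin (k + 3), ∑ j : Fin (p + 3), torusW (keyfun k p s) (i, j)
      ≤ ∑ i : Fin (k + 3), ∑ j : Fin (p + 3),
          (torusW (M := k + 1) (N := p) s (Fin.castSucc i, j)
            + if i = mrow k then torusW (M := k + 1) (N := p) s (Fin.last (k + 3), j) else 0) :=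
        Finset.sum_le_sum fun i _ => Finset.sum_le_sum fun j _ => pointwise k p s hsinj i j
    _ = (∑ i : Fin (k + 3), ∑ j : Fin (p + 3),
          torusW (M := k + 1) (N := p) s (Fin.castSucc i, j))
        + ∑ j : Fin (p + 3), torusW (M := k + 1) (N := p) s (Fin.last (k + 3), j) := by
        have hrow : ∀ i : Fin (k + 3),
            (∑ j : Fin (p + 3), (torusW (M := k + 1) (N := p) s (Fin.castSucc i, j)
              + if i = mrow k then torusW (M := k + 1) (N := p) s (Fin.last (k + 3), j) else 0))
            = (∑ j : Fin (p + 3), torusW (M := k + 1) (N := p) s (Fin.castSucc i, j))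
              + (if i = mrow k
                  then (∑ j : Fin (p + 3), torusW (M := k + 1) (N := p) s (Fin.last (k + 3), j))
                  else 0) := by
          intro i
          rw [Finset.sum_add_distrib]
          congr 1
          split_ifs with h
          · rfl
          · simp
        simp only [hrow]
        rw [Finset.sum_add_distrib, Finset.sum_ite_eq' Finset.univ (mrow k)
          (fun _ => ∑ j : Fin (p + 3), torusW (M := k + 1) (N := p) s (Fin.last (k + 3), j))]
        simp
end

section
/- For every even integer m ≥ 2, the brush number of K_m × P_2 is at least m²/2. -/
open Finset SimpleGraph

open scoped Classical

namespace BrushAux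

lemma two_mul_sum_Icc (k : ℕ) : 2 * (∑ j ∈ Finset.Icc 1 k, j) = k * (k + 1) := by
  induction k with
  | zero => simp
  | succ n ih =>
    rw [Finset.sum_Icc_succ_top (by omega), Nat.mul_add, ih]
    ring

variable {m : ℕ}

/-- the partner of a vertex (other endpoint of its matching edge) -/
def pr (v : Fin m × Fin 2) : Fin m × Fin 2 := (v.1, v.2 + 1)

lemma pr_pr (v : Fin m × Fin 2) : pr (pr v) = v := by
  have h : ∀ a : Fin 2, a + 1 + 1 = a := by decide
  simp [pr, h]

lemma pr_snd_ne (v : Fin m × Fin 2) : (pr v).2 ≠ v.2 := by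
  have h : ∀ a : Fin 2, a + 1 ≠ a := by decide
  exact h v.2

lemma eq_pr_of_snd_ne {u v : Fin m × Fin 2} (h1 : u.1 = v.1) (h2 : u.2 ≠ v.2) : u = pr v := by
  have h : ∀ a b : Fin 2, a ≠ b → a = b + 1 := by decide
  exact Prod.ext h1 (h u.2 v.2 h2)

variable (σ : (Fin m × Fin 2) ≃ Fin (Fintype.card (Fin m × Fin 2)))

/-- rank of `v` within its copy of `K_m`, `1`-based -/
noncomputable def rk (v : Fin m × Fin 2) : ℕ :=
  (Finset.univ.filter (fun u : Fin m × Fin 2 => u.2 = v.2 ∧ σ u ≤ σ v)).card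

noncomputable def iw (v : Fin m × Fin 2) : ℕ := if σ (pr v) < σ v then 1 else 0

lemma iw_le_one (v : Fin m × Fin 2) : iw σ v ≤ 1 := by
  unfold iw; split <;> omega

lemma adj_iff (v u : Fin m × Fin 2) :
    ((⊤ : SimpleGraph (Fin m)) □ pathGraph 2).Adj v u ↔ ((u.2 = v.2 ∧ u ≠ v) ∨ u = pr v) := by
  rw [boxProd_adj, pathGraph_two_eq_top]
  constructor
  · rintro (⟨h1, h2⟩ | ⟨h1, h2⟩)
    · exact Or.inl ⟨h2.symm, fun h => h1 ((congrArg Prod.fst h).symm)⟩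
    · exact Or.inr (eq_pr_of_snd_ne h2.symm (Ne.symm h1))
  · rintro (⟨h1, h2⟩ | rfl)
    · refine Or.inl ⟨fun h => h2 (Prod.ext h.symm h1), h1.symm⟩
    · exact Or.inr ⟨Ne.symm (pr_snd_ne v), rfl⟩

lemma card_copy (s : Fin 2) :
    (Finset.univ.filter (fun v : Fin m × Fin 2 => v.2 = s)).card = m := by
  have h : Finset.univ.filter (fun v : Fin m × Fin 2 => v.2 = s)
      = (Finset.univ : Finset (Fin m)) ×ˢ {s} := by
    ext ⟨a, b⟩
    simp [Finset.mem_product, eq_comm]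
  rw [h, Finset.card_product]
  simp

lemma rk_pos (v : Fin m × Fin 2) : 1 ≤ rk σ v := by
  have : v ∈ Finset.univ.filter (fun u : Fin m × Fin 2 => u.2 = v.2 ∧ σ u ≤ σ v) := by
    simp
  exact Finset.card_pos.2 ⟨v, this⟩

lemma rk_le (v : Fin m × Fin 2) : rk σ v ≤ m := by
  have h := card_copy (m := m) v.2
  refine le_trans (Finset.card_le_card ?_) h.le
  intro u hu
  simp only [Finset.mem_filter, Finset.mem_univ, true_and] at hu ⊢
  exact hu.1

lemma rk_mono {u v : Fin m × Fin 2} (h : u.2 = v.2) (hle : σ u ≤ σ v) : rk σ u ≤ rk σ v := by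
  apply Finset.card_le_card
  intro w hw
  simp only [Finset.mem_filter, Finset.mem_univ, true_and] at hw ⊢
  exact ⟨hw.1.trans h, hw.2.trans hle⟩

lemma rk_strict_mono {u v : Fin m × Fin 2} (h : u.2 = v.2) (hlt : σ u < σ v) :
    rk σ u < rk σ v := by
  apply Finset.card_lt_card
  constructor
  · intro w hw
    simp only [Finset.mem_filter, Finset.mem_univ, true_and] at hw ⊢
    exact ⟨hw.1.trans h, hw.2.trans hlt.le⟩
  · intro hsub
    have hv : v ∈ Finset.univ.filter (fun w : Fin m × Fin 2 => w.2 = v.2 ∧ σ w ≤ σ v) := by simp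
    have := hsub hv
    simp only [Finset.mem_filter, Finset.mem_univ, true_and] at this
    exact absurd (lt_of_le_of_lt this.2 hlt) (lt_irrefl _)

lemma rk_injOn {u v : Fin m × Fin 2} (h : u.2 = v.2) (hr : rk σ u = rk σ v) : u = v := by
  rcases lt_trichotomy (σ u) (σ v) with hlt | heq | hgt
  · exact absurd hr (Nat.ne_of_lt (rk_strict_mono σ h hlt))
  · exact σ.injective heq
  · exact absurd hr.symm (Nat.ne_of_lt (rk_strict_mono σ h.symm hgt))


noncomputable def upc (v : Fin m × Fin 2) : ℕ :=
  (Finset.univ.filter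
    (fun u => ((⊤ : SimpleGraph (Fin m)) □ pathGraph 2).Adj v u ∧ σ v < σ u)).card

noncomputable def dnc (v : Fin m × Fin 2) : ℕ :=
  (Finset.univ.filter
    (fun u => ((⊤ : SimpleGraph (Fin m)) □ pathGraph 2).Adj v u ∧ σ u < σ v)).card

lemma brushWeight_eq (v : Fin m × Fin 2) :
    brushWeight ((⊤ : SimpleGraph (Fin m)) □ pathGraph 2) σ v = upc σ v - dnc σ v := rfl

lemma upc_add_dnc (hm : 1 ≤ m) (v : Fin m × Fin 2) : upc σ v + dnc σ v = m := by
  set G := (⊤ : SimpleGraph (Fin m)) □ pathGraph 2 with hG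
  set A := Finset.univ.filter (fun u => G.Adj v u ∧ σ v < σ u) with hA
  set B := Finset.univ.filter (fun u => G.Adj v u ∧ σ u < σ v) with hB
  have hdisj : Disjoint A B := by
    rw [Finset.disjoint_left]
    intro u hu hu'
    simp only [hA, hB, Finset.mem_filter, Finset.mem_univ, true_and] at hu hu'
    exact absurd (hu.2.trans hu'.2) (lt_irrefl _)
  have hunion : A ∪ B = Finset.univ.filter (fun u => G.Adj v u) := by
    ext u
    simp only [hA, hB, Finset.mem_union, Finset.mem_filter, Finset.mem_univ, true_and]
    constructor
    · rintro (⟨h, _⟩ | ⟨h, _⟩) <;> exact h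
    · intro h
      have hne : σ v ≠ σ u := fun he => (G.ne_of_adj h) (σ.injective he)
      rcases lt_or_gt_of_ne hne with hlt | hgt
      · exact Or.inl ⟨h, hlt⟩
      · exact Or.inr ⟨h, hgt⟩
  have hadjcard : (Finset.univ.filter (fun u => G.Adj v u)).card = m := by
    have heq : Finset.univ.filter (fun u => G.Adj v u)
        = ((Finset.univ.erase v.1) ×ˢ {v.2}) ∪ {pr v} := by
      ext ⟨a, b⟩
      simp only [hG, Finset.mem_filter, Finset.mem_univ, true_and, adj_iff,
        Finset.mem_union, Finset.mem_product, Finset.mem_erase, Finset.mem_singleton,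
        Prod.ext_iff, pr, ne_eq]
      tauto
    have hnot : pr v ∉ (Finset.univ.erase v.1) ×ˢ ({v.2} : Finset (Fin 2)) := by
      simp only [Finset.mem_product, Finset.mem_singleton]
      intro h
      exact pr_snd_ne v h.2
    rw [heq, Finset.card_union_of_disjoint (Finset.disjoint_singleton_right.2 hnot),
      Finset.card_product, Finset.card_singleton, Finset.card_erase_of_mem (Finset.mem_univ _),
      Finset.card_singleton, Finset.card_univ, Fintype.card_fin]
    omega
  have := Finset.card_union_of_disjoint hdisj
  rw [hunion, hadjcard] at this
  unfold upc dnc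
  rw [← hG, ← hA, ← hB]
  omega

lemma dnc_eq (v : Fin m × Fin 2) : dnc σ v + 1 = rk σ v + iw σ v := by
  set G := (⊤ : SimpleGraph (Fin m)) □ pathGraph 2 with hG
  set D := Finset.univ.filter (fun u : Fin m × Fin 2 => u.2 = v.2 ∧ u ≠ v ∧ σ u < σ v) with hD
  have hrk : rk σ v = D.card + 1 := by
    have heq : Finset.univ.filter (fun u : Fin m × Fin 2 => u.2 = v.2 ∧ σ u ≤ σ v)
        = insert v D := by
      ext u
      simp only [hD, Finset.mem_filter, Finset.mem_univ, true_and, Finset.mem_insert]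
      constructor
      · rintro ⟨h1, h2⟩
        rcases eq_or_ne u v with rfl | hne
        · exact Or.inl rfl
        · refine Or.inr ⟨h1, hne, lt_of_le_of_ne h2 ?_⟩
          exact fun he => hne (σ.injective he)
      · rintro (rfl | ⟨h1, _, h3⟩)
        · exact ⟨rfl, le_refl _⟩
        · exact ⟨h1, h3.le⟩
    have hv : v ∉ D := by simp [hD]
    rw [rk, heq, Finset.card_insert_of_notMem hv]
  have hdn : dnc σ v = D.card + iw σ v := by
    set E := (if σ (pr v) < σ v then ({pr v} : Finset (Fin m × Fin 2)) else ∅) with hE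
    have hEcard : E.card = iw σ v := by
      rw [hE, iw]; split <;> simp
    have heq : Finset.univ.filter (fun u => G.Adj v u ∧ σ u < σ v) = D ∪ E := by
      ext u
      simp only [hD, Finset.mem_filter, Finset.mem_univ, true_and, Finset.mem_union, hG, adj_iff]
      have hmemE : u ∈ E ↔ u = pr v ∧ σ u < σ v := by
        rw [hE]; split <;> simp_all
      rw [hmemE]
      tauto
    have hdisj : Disjoint D E := by
      rw [Finset.disjoint_left]
      intro u hu huE
      have : u = pr v ∧ σ u < σ v := by
        rw [hE] at huE; revert huE; split <;> simp_all
      simp only [hD, Finset.mem_filter] at hu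
      exact pr_snd_ne v (this.1 ▸ hu.2.1)
    rw [dnc, ← hG, heq, Finset.card_union_of_disjoint hdisj, hEcard]
  omega

lemma key_pointwise (hm : 1 ≤ m) (v : Fin m × Fin 2) :
    ((m : ℤ) + 2) - 2 * rk σ v - 2 * iw σ v
      ≤ (brushWeight ((⊤ : SimpleGraph (Fin m)) □ pathGraph 2) σ v : ℤ) := by
  have h1 := upc_add_dnc σ hm v
  have h2 := dnc_eq σ v
  have h3 := iw_le_one σ v
  have h4 := brushWeight_eq σ v
  omega


/-- the set of "low rank" vertices of copy `s` -/
noncomputable def Ts (k : ℕ) (s : Fin 2) : Finset (Fin m × Fin 2) :=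
  Finset.univ.filter (fun v => v.2 = s ∧ rk σ v ≤ k)

lemma image_rk_copy (s : Fin 2) :
    (Finset.univ.filter (fun v : Fin m × Fin 2 => v.2 = s)).image (rk σ) = Finset.Icc 1 m := by
  apply Finset.eq_of_subset_of_card_le
  · intro j hj
    simp only [Finset.mem_image, Finset.mem_filter, Finset.mem_univ, true_and] at hj
    obtain ⟨v, _, rfl⟩ := hj
    exact Finset.mem_Icc.2 ⟨rk_pos σ v, rk_le σ v⟩
  · rw [Nat.card_Icc, Finset.card_image_of_injOn, card_copy]
    · omega
    · intro u hu v hv h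
      simp only [Finset.coe_filter, Set.mem_setOf_eq] at hu hv
      exact rk_injOn σ (hu.2.trans hv.2.symm) h

lemma injOn_rk_Ts (k : ℕ) (s : Fin 2) : Set.InjOn (rk σ) (Ts σ k s) := by
  intro u hu v hv h
  simp only [Ts, Finset.coe_filter, Set.mem_setOf_eq] at hu hv
  exact rk_injOn σ (hu.2.1.trans hv.2.1.symm) h

lemma image_rk_Ts {k : ℕ} (hkm : k ≤ m) (s : Fin 2) :
    (Ts σ k s).image (rk σ) = Finset.Icc 1 k := by
  apply Finset.Subset.antisymm
  · intro j hj
    simp only [Ts, Finset.mem_image, Finset.mem_filter, Finset.mem_univ, true_and] at hj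
    obtain ⟨v, hv, rfl⟩ := hj
    exact Finset.mem_Icc.2 ⟨rk_pos σ v, hv.2⟩
  · intro j hj
    rw [Finset.mem_Icc] at hj
    have hj' : j ∈ Finset.Icc 1 m := Finset.mem_Icc.2 ⟨hj.1, hj.2.trans hkm⟩
    rw [← image_rk_copy σ s, Finset.mem_image] at hj'
    obtain ⟨v, hv, rfl⟩ := hj'
    simp only [Finset.mem_filter, Finset.mem_univ, true_and] at hv
    refine Finset.mem_image.2 ⟨v, ?_, rfl⟩
    simp only [Ts, Finset.mem_filter, Finset.mem_univ, true_and]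
    exact ⟨hv, hj.2⟩

lemma card_Ts {k : ℕ} (hkm : k ≤ m) (s : Fin 2) : (Ts σ k s).card = k := by
  have h := Finset.card_image_of_injOn (injOn_rk_Ts σ k s)
  rw [image_rk_Ts σ hkm s, Nat.card_Icc] at h
  omega

lemma sum_rk_Ts {k : ℕ} (hkm : k ≤ m) (s : Fin 2) :
    ∑ v ∈ Ts σ k s, rk σ v = ∑ j ∈ Finset.Icc 1 k, j := by
  rw [← image_rk_Ts σ hkm s, Finset.sum_image (fun u hu v hv h => injOn_rk_Ts σ k s hu hv h)]

lemma card_S_le {k : ℕ} (hk1 : 1 ≤ k) (hkm : k ≤ m) :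
    (Finset.univ.filter (fun v : Fin m × Fin 2 => rk σ v ≤ k ∧ σ (pr v) < σ v)).card ≤ k := by
  have hne0 : (Ts σ k 0).Nonempty := Finset.card_pos.1 (by rw [card_Ts σ hkm 0]; omega)
  have hne1 : (Ts σ k 1).Nonempty := Finset.card_pos.1 (by rw [card_Ts σ hkm 1]; omega)
  obtain ⟨v0, hv0, hmax0⟩ := Finset.exists_max_image (Ts σ k 0) (fun v => σ v) hne0
  obtain ⟨v1, hv1, hmax1⟩ := Finset.exists_max_image (Ts σ k 1) (fun v => σ v) hne1
  simp only [Ts, Finset.mem_filter, Finset.mem_univ, true_and] at hv0 hv1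
  set vm := if σ v0 ≤ σ v1 then v1 else v0 with hvm
  have hrvm : rk σ vm ≤ k := by
    rw [hvm]; split
    · exact hv1.2
    · exact hv0.2
  have hmem : ∀ a : Fin m × Fin 2, rk σ a ≤ k → a ∈ Ts σ k a.2 := by
    intro a ha
    simp only [Ts, Finset.mem_filter, Finset.mem_univ, true_and]
    exact ha
  have hdom : ∀ a : Fin m × Fin 2, rk σ a ≤ k → σ a ≤ σ vm := by
    intro a ha
    have h01 : ∀ b : Fin 2, b = 0 ∨ b = 1 := by decide
    have hle : σ a ≤ σ v0 ∨ σ a ≤ σ v1 := by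
      rcases h01 a.2 with h | h
      · refine Or.inl (hmax0 a ?_)
        rw [← h]; exact hmem a ha
      · refine Or.inr (hmax1 a ?_)
        rw [← h]; exact hmem a ha
    rw [hvm]
    split
    · rcases hle with h | h
      · exact h.trans (by assumption)
      · exact h
    · rcases hle with h | h
      · exact h
      · exact h.trans (le_of_not_ge (by assumption))
  have hmaps : ∀ v ∈ Finset.univ.filter
      (fun v : Fin m × Fin 2 => rk σ v ≤ k ∧ σ (pr v) < σ v),
      (v.1, vm.2) ∈ Ts σ k vm.2 := by
    intro v hv
    simp only [Finset.mem_filter, Finset.mem_univ, true_and] at hv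
    have hσ : σ (v.1, vm.2) ≤ σ vm := by
      rcases eq_or_ne v.2 vm.2 with he | hne
      · have : (v.1, vm.2) = v := Prod.ext rfl he.symm
        rw [this]
        exact hdom v hv.1
      · have : (v.1, vm.2) = pr v := eq_pr_of_snd_ne rfl (fun h => hne h.symm)
        rw [this]
        exact (hv.2.trans_le (hdom v hv.1)).le
    simp only [Ts, Finset.mem_filter, Finset.mem_univ, true_and]
    exact (rk_mono σ (u := (v.1, vm.2)) (v := vm) rfl hσ).trans hrvm
  have hinj : Set.InjOn (fun v : Fin m × Fin 2 => (v.1, vm.2))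
      (Finset.univ.filter (fun v : Fin m × Fin 2 => rk σ v ≤ k ∧ σ (pr v) < σ v)) := by
    intro u hu v hv h
    simp only [Finset.coe_filter, Set.mem_setOf_eq] at hu hv
    have h' : (u.1, vm.2) = (v.1, vm.2) := h
    have h1 : u.1 = v.1 := (Prod.ext_iff.1 h').1
    rcases eq_or_ne u.2 v.2 with he | hne
    · exact Prod.ext h1 he
    · exfalso
      have huv : u = pr v := eq_pr_of_snd_ne h1 hne
      have hvu : v = pr u := by rw [huv, pr_pr]
      have c1 := hu.2.2
      have c2 := hv.2.2
      rw [← hvu] at c1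
      rw [← huv] at c2
      exact absurd (c1.trans c2) (lt_irrefl _)
  calc (Finset.univ.filter
        (fun v : Fin m × Fin 2 => rk σ v ≤ k ∧ σ (pr v) < σ v)).card
      ≤ (Ts σ k vm.2).card := Finset.card_le_card_of_injOn _ hmaps hinj
    _ = k := card_Ts σ hkm vm.2

lemma key (k : ℕ) (hk1 : 1 ≤ k) (hmk : m = 2 * k)
    (σ : (Fin m × Fin 2) ≃ Fin (Fintype.card (Fin m × Fin 2))) :
    2 * k ^ 2 ≤ ∑ v, brushWeight ((⊤ : SimpleGraph (Fin m)) □ pathGraph 2) σ v := by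
  have hm1 : 1 ≤ m := by omega
  have hkm : k ≤ m := by omega
  set G := (⊤ : SimpleGraph (Fin m)) □ pathGraph 2 with hG
  set Tlow := Finset.univ.filter (fun v : Fin m × Fin 2 => rk σ v ≤ k) with hT
  have hsplit0 : Tlow.filter (fun v => v.2 = 0) = Ts σ k 0 := by
    ext v; simp only [hT, Ts, Finset.mem_filter, Finset.mem_univ, true_and]; tauto
  have hsplit1 : Tlow.filter (fun v => ¬ v.2 = 0) = Ts σ k 1 := by
    ext v
    have h01 : ∀ b : Fin 2, ¬ b = 0 ↔ b = 1 := by decide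
    simp only [hT, Ts, Finset.mem_filter, Finset.mem_univ, true_and, h01]
    tauto
  have hsum1 : ∑ v ∈ Tlow, ((m : ℤ) + 2 - 2 * rk σ v)
      = ∑ v ∈ Ts σ k 0, ((m : ℤ) + 2 - 2 * rk σ v)
        + ∑ v ∈ Ts σ k 1, ((m : ℤ) + 2 - 2 * rk σ v) := by
    rw [← Finset.sum_filter_add_sum_filter_not Tlow (fun v => v.2 = 0), hsplit0, hsplit1]
  have hcopy : ∀ s : Fin 2, ∑ v ∈ Ts σ k s, ((m : ℤ) + 2 - 2 * rk σ v)
      = (k : ℤ) * ((m : ℤ) + 2) - 2 * ((∑ j ∈ Finset.Icc 1 k, j : ℕ) : ℤ) := by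
    intro s
    rw [Finset.sum_sub_distrib, Finset.sum_const, card_Ts σ hkm s, nsmul_eq_mul,
      ← Finset.mul_sum]
    congr 1
    rw [← Nat.cast_sum, sum_rk_Ts σ hkm s]
  have hiwsum : ∑ v ∈ Tlow, iw σ v
      = (Tlow.filter (fun v => σ (pr v) < σ v)).card := by
    rw [Finset.card_filter]
    exact Finset.sum_congr rfl fun v _ => rfl
  have hSeq : Tlow.filter (fun v => σ (pr v) < σ v)
      = Finset.univ.filter (fun v : Fin m × Fin 2 => rk σ v ≤ k ∧ σ (pr v) < σ v) := by
    ext v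
    simp only [hT, Finset.mem_filter, Finset.mem_univ, true_and, and_assoc]
  have hScard : (Tlow.filter (fun v => σ (pr v) < σ v)).card ≤ k := by
    rw [hSeq]; exact card_S_le σ hk1 hkm
  have h1 : ∑ v ∈ Tlow, ((m : ℤ) + 2 - 2 * rk σ v - 2 * iw σ v)
      ≤ ∑ v ∈ Tlow, (brushWeight G σ v : ℤ) :=
    Finset.sum_le_sum (fun v _ => key_pointwise σ hm1 v)
  have h2 : ∑ v ∈ Tlow, (brushWeight G σ v : ℤ) ≤ ∑ v, (brushWeight G σ v : ℤ) :=
    Finset.sum_le_sum_of_subset_of_nonneg (Finset.subset_univ _)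
      (fun i _ _ => Int.natCast_nonneg _)
  have h3 : ∑ v ∈ Tlow, ((m : ℤ) + 2 - 2 * rk σ v - 2 * iw σ v)
      = ∑ v ∈ Tlow, ((m : ℤ) + 2 - 2 * rk σ v) - 2 * ∑ v ∈ Tlow, (iw σ v : ℤ) := by
    rw [Finset.sum_sub_distrib, Finset.mul_sum]
  have hiwcast : ∑ v ∈ Tlow, (iw σ v : ℤ) = ((∑ v ∈ Tlow, iw σ v : ℕ) : ℤ) := by
    rw [Nat.cast_sum]
  have hgauss : 2 * (∑ j ∈ Finset.Icc 1 k, j) = k * (k + 1) := two_mul_sum_Icc k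
  have hfin : (2 * k ^ 2 : ℤ) ≤ ∑ v, (brushWeight G σ v : ℤ) := by
    have e0 := hcopy 0
    have e1 := hcopy 1
    have hmc : (m : ℤ) = 2 * k := by exact_mod_cast congrArg (Nat.cast : ℕ → ℤ) hmk
    have hg : (2 : ℤ) * ((∑ j ∈ Finset.Icc 1 k, j : ℕ) : ℤ) = (k : ℤ) * (k + 1) := by
      exact_mod_cast congrArg (Nat.cast : ℕ → ℤ) hgauss
    have hs : ((∑ v ∈ Tlow, iw σ v : ℕ) : ℤ) ≤ (k : ℤ) := by
      rw [hiwsum]; exact_mod_cast hScard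
    have hexp : (k : ℤ) * ((m : ℤ) + 2) = 2 * (k : ℤ) ^ 2 + 2 * k := by
      rw [hmc]; ring
    rw [h3, hsum1, e0, e1, hiwcast] at h1
    have := h1.trans h2
    nlinarith [this, hg, hs, hexp]
  exact_mod_cast hfin.trans_eq (Nat.cast_sum _ _).symm

end BrushAux

/-- For every even integer m ≥ 2, the brush number of K_m × P_2 is at least m²/2. -/
theorem brushNumber_complete_path_two (m : ℕ) (hm : 2 ≤ m) (hme : Even m) :
    m ^ 2 / 2 ≤ brushNumber ((⊤ : SimpleGraph (Fin m)) □ pathGraph 2) := by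
  obtain ⟨k, hk⟩ := hme
  have hk1 : 1 ≤ k := by omega
  have hmk : m = 2 * k := by omega
  have hsq : m ^ 2 / 2 = 2 * k ^ 2 := by
    have h : m ^ 2 = 2 * (2 * k ^ 2) := by subst hmk; ring
    rw [h, Nat.mul_div_cancel_left _ (by norm_num)]
  rw [hsq, brushNumber]
  have : Nonempty ((Fin m × Fin 2) ≃ Fin (Fintype.card (Fin m × Fin 2))) :=
    ⟨Fintype.equivFin _⟩
  exact le_ciInf fun σ => BrushAux.key k hk1 hmk σ
end

section
/- For every even integer m ≥ 2 and every integer n ≥ 2, the brush number of K_m × P_n equals n·(m²/4). -/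
open Finset SimpleGraph

/-!
Let `s(v, u) = cmpSign (σ v) (σ u) ∈ {1, 0, -1}` be the sign of `σ u - σ v` and
`signedDeg σ v = ∑_{u ~ v} s(v, u)`. Then `w_σ(v) = max 0 (signedDeg σ v)`, so
`∑_v w_σ(v) ≥ ∑_{v ∈ S} signedDeg σ v` for every vertex set `S`.

Lower bound: in each layer `K_m × {j}` let `A_j` consist of the `k` vertices that come first
under `σ`, and take `S = ⋃_j A_j × {j}`. Inside a layer the clique edges contribute `k (m - k)`.
The edges `(i,j) ~ (i,j')` between two layers contribute
`∑_{i ∈ A_j} s((i,j),(i,j')) + ∑_{i ∈ A_{j'}} s((i,j'),(i,j))`, which is nonnegative: the terms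
with `i ∈ A_j ∩ A_{j'}` cancel, `|A_j \ A_{j'}| = |A_{j'} \ A_j|`, and either all terms over the
first difference or all terms over the second are `+1`, for otherwise some `i ∈ A_j \ A_{j'}`
and `i' ∈ A_{j'} \ A_j` would give `σ(i,j') < σ(i,j) < σ(i',j) < σ(i',j') < σ(i,j')`.
For `m = 2k` this gives `b ≥ n k²`.

Upper bound: listing the copies `{i} × P_n` one after another gives
`signedDeg (i, j) = m - 1 - 2i + δ(j)`, where `δ` is the signed degree in `P_n`, so
`|δ(j)| ≤ 1` and `∑_j δ(j) = 0`; the positive parts then add up to `n k²`.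
-/

open scoped Classical

section CmpSign

variable {α : Type*} [LinearOrder α]

def cmpSign (a b : α) : ℤ := (if a < b then 1 else 0) - (if b < a then 1 else 0)

theorem cmpSign_swap (a b : α) : cmpSign b a = -cmpSign a b := by
  unfold cmpSign; ring

theorem cmpSign_self (a : α) : cmpSign a a = 0 := by
  simp [cmpSign]

theorem cmpSign_of_lt {a b : α} (h : a < b) : cmpSign a b = 1 := by
  simp [cmpSign, h, h.not_gt]

theorem neg_one_le_cmpSign (a b : α) : -1 ≤ cmpSign a b := by
  unfold cmpSign; split_ifs <;> norm_num

theorem StrictMono.cmpSign_comp {β : Type*} [LinearOrder β] {f : α → β} (hf : StrictMono f)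
    (a b : α) : cmpSign (f a) (f b) = cmpSign a b := by
  simp only [cmpSign, hf.lt_iff_lt]

theorem sum_sum_cmpSign_eq_zero {ι : Type*} (s : Finset ι) (f : ι → α) :
    ∑ a ∈ s, ∑ b ∈ s, cmpSign (f a) (f b) = 0 := by
  have h :
      ∑ a ∈ s, ∑ b ∈ s, cmpSign (f a) (f b) = -∑ a ∈ s, ∑ b ∈ s, cmpSign (f a) (f b) :=
    calc _ = ∑ a ∈ s, ∑ b ∈ s, cmpSign (f b) (f a) := sum_comm
      _ = ∑ a ∈ s, ∑ b ∈ s, -cmpSign (f a) (f b) :=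
        sum_congr rfl fun _ _ => sum_congr rfl fun _ _ => cmpSign_swap _ _
      _ = _ := by simp only [sum_neg_distrib]
  omega

theorem Fin.sum_cmpSign {m : ℕ} (i : Fin m) : ∑ i', cmpSign i i' = (m : ℤ) - 1 - 2 * i := by
  simp only [cmpSign, sum_sub_distrib, sum_boole, filter_lt_eq_Ioi, filter_gt_eq_Iio,
    Fin.card_Ioi, Fin.card_Iio]
  have := i.isLt
  omega

end CmpSign

theorem sum_range_max_zero (M : ℕ) {h : ℤ} (h₁ : -1 ≤ h) (h₂ : h ≤ 1) :
    ∑ i ∈ range (2 * M), max 0 (2 * (M : ℤ) - 1 - 2 * i + h) = M * M + M * h := by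
  induction M with
  | zero => simp
  | succ M ih =>
    rw [show 2 * (M + 1) = 2 * M + 1 + 1 by ring, sum_range_succ, sum_range_succ']
    push_cast
    simp only [show ∀ i : ℕ, 2 * ((M : ℤ) + 1) - 1 - 2 * ((i : ℤ) + 1) + h =
      2 * M - 1 - 2 * i + h from fun i => by ring, ih]
    rw [max_eq_right (by linarith), max_eq_left (by linarith)]
    ring

section InitialSegment

variable {ι α : Type*} [LinearOrder α]

def IsInitialSegment (f : ι → α) (A : Finset ι) : Prop := ∀ a ∈ A, ∀ b ∉ A, f a < f b

theorem exists_isInitialSegment [Fintype ι] {f : ι → α} (hf : Function.Injective f) {k : ℕ}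
    (hk : k ≤ Fintype.card ι) : ∃ A : Finset ι, #A = k ∧ IsInitialSegment f A := by
  induction k with
  | zero => exact ⟨∅, rfl, by simp [IsInitialSegment]⟩
  | succ k ih =>
    obtain ⟨A, hAk, hA⟩ := ih (by omega)
    have hne : Aᶜ.Nonempty := by rw [← card_pos, card_compl]; omega
    obtain ⟨c, hc, hcmin⟩ := Aᶜ.exists_min_image f hne
    rw [mem_compl] at hc
    refine ⟨insert c A, by rw [card_insert_of_notMem hc, hAk], ?_⟩
    intro a ha b hb
    rw [mem_insert, not_or] at hb
    rcases mem_insert.1 ha with rfl | ha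
    · exact (hcmin b (mem_compl.2 hb.2)).lt_of_ne (hf.ne (Ne.symm hb.1))
    · exact hA a ha b hb.2

theorem sum_sum_cmpSign_of_isInitialSegment [Fintype ι] {f : ι → α} {A : Finset ι}
    (hA : IsInitialSegment f A) : ∑ a ∈ A, ∑ b, cmpSign (f a) (f b) = #A * #Aᶜ := by
  calc ∑ a ∈ A, ∑ b, cmpSign (f a) (f b)
        = ∑ a ∈ A, ∑ b ∈ A, cmpSign (f a) (f b) + ∑ a ∈ A, ∑ b ∈ Aᶜ, cmpSign (f a) (f b) := by
          rw [← sum_add_distrib]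
          exact sum_congr rfl fun a _ => (sum_add_sum_compl A _).symm
    _ = ∑ a ∈ A, ∑ b ∈ Aᶜ, (1 : ℤ) := by
          rw [sum_sum_cmpSign_eq_zero, zero_add]
          exact sum_congr rfl fun a ha => sum_congr rfl fun b hb =>
            cmpSign_of_lt (hA a ha b (mem_compl.1 hb))
    _ = #A * #Aᶜ := by simp

theorem sum_cmpSign_add_sum_cmpSign_nonneg_of_forall_lt {f g : ι → α} {A B : Finset ι}
    (hcard : #A = #B) (h : ∀ i ∈ A \ B, f i < g i) :
    0 ≤ ∑ i ∈ A, cmpSign (f i) (g i) + ∑ i ∈ B, cmpSign (g i) (f i) := by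
  rw [← sum_inter_add_sum_sdiff A B, ← sum_inter_add_sum_sdiff B A, inter_comm B A]
  have hcancel :
      ∑ i ∈ A ∩ B, cmpSign (f i) (g i) + ∑ i ∈ A ∩ B, cmpSign (g i) (f i) = 0 := by
    rw [← sum_add_distrib]
    exact sum_eq_zero fun i _ => by rw [cmpSign_swap]; ring
  have hAB : ∑ i ∈ A \ B, cmpSign (f i) (g i) = #(A \ B) := by
    rw [sum_congr rfl fun i hi => cmpSign_of_lt (h i hi)]
    simp
  have hBA : #(B \ A) • (-1 : ℤ) ≤ ∑ i ∈ B \ A, cmpSign (g i) (f i) :=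
    card_nsmul_le_sum _ _ _ fun i _ => neg_one_le_cmpSign _ _
  have hsd : (#(A \ B) : ℤ) = #(B \ A) := by exact_mod_cast card_sdiff_comm hcard
  rw [smul_neg, nsmul_eq_mul, mul_one] at hBA
  linarith

theorem sum_cmpSign_add_sum_cmpSign_nonneg {f g : ι → α} {A B : Finset ι}
    (hA : IsInitialSegment f A) (hB : IsInitialSegment g B) (hcard : #A = #B) :
    0 ≤ ∑ i ∈ A, cmpSign (f i) (g i) + ∑ i ∈ B, cmpSign (g i) (f i) := by
  have key : (∀ i ∈ A \ B, f i < g i) ∨ ∀ i ∈ B \ A, g i < f i := by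
    by_contra! h
    obtain ⟨⟨i, hi, hgi⟩, ⟨j, hj, hfj⟩⟩ := h
    rw [mem_sdiff] at hi hj
    exact lt_irrefl (g i) <| calc
      g i ≤ f i := hgi
      _ < f j := hA i hi.1 j hj.2
      _ ≤ g j := hfj
      _ < g i := hB j hj.1 i hi.2
  rcases key with h | h
  · exact sum_cmpSign_add_sum_cmpSign_nonneg_of_forall_lt hcard h
  · rw [add_comm]
    exact sum_cmpSign_add_sum_cmpSign_nonneg_of_forall_lt hcard.symm h

end InitialSegment

def prodLexOrder (m n : ℕ) : Fin m × Fin n ≃ Fin (Fintype.card (Fin m × Fin n)) :=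
  finProdFinEquiv.trans (finCongr (by simp))

theorem prodLexOrder_val {m n : ℕ} (v : Fin m × Fin n) :
    (prodLexOrder m n v : ℕ) = v.2 + n * v.1 := by
  simp [prodLexOrder]

theorem strictMono_prodLexOrder_fst {m n : ℕ} (j : Fin n) :
    StrictMono fun i : Fin m => prodLexOrder m n (i, j) := fun a b h => by
  rw [Fin.lt_def, prodLexOrder_val, prodLexOrder_val]
  exact Nat.add_lt_add_left (Nat.mul_lt_mul_of_pos_left h j.pos) _

theorem strictMono_prodLexOrder_snd {m n : ℕ} (i : Fin m) :
    StrictMono fun j : Fin n => prodLexOrder m n (i, j) := fun a b h => by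
  rw [Fin.lt_def, prodLexOrder_val, prodLexOrder_val]
  exact Nat.add_lt_add_right h _

namespace SimpleGraph

section SignedDegree

variable {V : Type*} [Fintype V] (G : SimpleGraph V) {α : Type*} [LinearOrder α]

noncomputable def signedDeg (ρ : V → α) (v : V) : ℤ :=
  ∑ u ∈ G.neighborFinset v, cmpSign (ρ v) (ρ u)

theorem signedDeg_eq (ρ : V → α) (v : V) :
    G.signedDeg ρ v =
      #{u ∈ G.neighborFinset v | ρ v < ρ u} - #{u ∈ G.neighborFinset v | ρ u < ρ v} := by
  simp only [signedDeg, cmpSign, sum_sub_distrib, sum_boole]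

theorem sum_sum_neighborFinset_comm {M : Type*} [AddCommMonoid M] (f : V → V → M) :
    ∑ v, ∑ u ∈ G.neighborFinset v, f v u = ∑ v, ∑ u ∈ G.neighborFinset v, f u v := by
  simp only [neighborFinset_eq_filter, sum_filter]
  rw [sum_comm]
  exact sum_congr rfl fun v _ => sum_congr rfl fun u _ => by rw [G.adj_comm]

theorem sum_signedDeg (ρ : V → α) : ∑ v, G.signedDeg ρ v = 0 := by
  have h : ∑ v, G.signedDeg ρ v = ∑ v, ∑ u ∈ G.neighborFinset v, -cmpSign (ρ v) (ρ u) :=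
    (G.sum_sum_neighborFinset_comm _).trans
      (sum_congr rfl fun _ _ => sum_congr rfl fun _ _ => cmpSign_swap _ _)
  simp only [sum_neg_distrib] at h
  unfold signedDeg at h ⊢
  omega

theorem sum_sum_neighborFinset_nonneg (f : V → V → ℤ)
    (hf : ∀ v u, G.Adj v u → 0 ≤ f v u + f u v) :
    0 ≤ ∑ v, ∑ u ∈ G.neighborFinset v, f v u := by
  have h := G.sum_sum_neighborFinset_comm f
  have : 0 ≤ ∑ v, ∑ u ∈ G.neighborFinset v, (f v u + f u v) :=
    sum_nonneg fun v _ => sum_nonneg fun u hu => hf v u ((G.mem_neighborFinset v u).1 hu)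
  simp only [sum_add_distrib] at this
  linarith

end SignedDegree

section Brush

variable {V : Type} [Fintype V] (G : SimpleGraph V)

theorem brushWeight_eq_max_signedDeg (σ : V ≃ Fin (Fintype.card V)) (v : V) :
    (brushWeight G σ v : ℤ) = max 0 (G.signedDeg σ v) := by
  rw [signedDeg_eq, brushWeight]
  simp only [neighborFinset_eq_filter, filter_filter]
  omega

theorem brushNumber_le_sum_brushWeight (σ : V ≃ Fin (Fintype.card V)) :
    brushNumber G ≤ ∑ v, brushWeight G σ v :=
  ciInf_le (OrderBot.bddBelow _) σ

theorem le_brushNumber {c : ℕ}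
    (h : ∀ σ : V ≃ Fin (Fintype.card V), c ≤ ∑ v, brushWeight G σ v) :
    c ≤ brushNumber G :=
  have : Nonempty (V ≃ Fin (Fintype.card V)) := ⟨Fintype.equivFin V⟩
  le_ciInf h

end Brush

theorem signedDeg_top_boxProd {ι W α : Type*} [Fintype ι] [Fintype W] [LinearOrder α]
    (H : SimpleGraph W) (ρ : ι × W → α) (i : ι) (j : W) :
    ((⊤ : SimpleGraph ι) □ H).signedDeg ρ (i, j) =
      ∑ i', cmpSign (ρ (i, j)) (ρ (i', j)) +
        ∑ j' ∈ H.neighborFinset j, cmpSign (ρ (i, j)) (ρ (i, j')) := by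
  rw [signedDeg, neighborFinset_boxProd, sum_disjUnion, sum_product, sum_product,
    neighborFinset_top, ← sum_compl_add_sum {i}]
  simp [cmpSign_self]

theorem abs_signedDeg_pathGraph_le_one (n : ℕ) (j : Fin n) :
    |(pathGraph n).signedDeg id j| ≤ 1 := by
  have h₁ : #{u ∈ (pathGraph n).neighborFinset j | j < u} ≤ 1 :=
    card_le_one.2 fun a ha b hb => by
      simp only [mem_filter, mem_neighborFinset, pathGraph_adj, Fin.lt_def] at ha hb
      exact Fin.ext (by omega)
  have h₂ : #{u ∈ (pathGraph n).neighborFinset j | u < j} ≤ 1 :=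
    card_le_one.2 fun a ha b hb => by
      simp only [mem_filter, mem_neighborFinset, pathGraph_adj, Fin.lt_def] at ha hb
      exact Fin.ext (by omega)
  rw [signedDeg_eq, abs_le]
  simp only [id]
  omega

section LowerBound

variable {ι W : Type} [Fintype ι] [Fintype W] (H : SimpleGraph W)

theorem le_sum_brushWeight_top_boxProd {k : ℕ} (hk : k ≤ Fintype.card ι)
    (σ : ι × W ≃ Fin (Fintype.card (ι × W))) :
    ((Fintype.card W * (k * (Fintype.card ι - k)) : ℕ) : ℤ) ≤
      ∑ v, (brushWeight ((⊤ : SimpleGraph ι) □ H) σ v : ℤ) := by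
  have hinj (j : W) : Function.Injective fun i => σ (i, j) :=
    fun _ _ h => congrArg Prod.fst (σ.injective h)
  choose A hcard hA using fun j => exists_isInitialSegment (hinj j) hk
  have hpath :
      0 ≤ ∑ j, ∑ i ∈ A j, ∑ j' ∈ H.neighborFinset j, cmpSign (σ (i, j)) (σ (i, j')) := by
    rw [sum_congr rfl fun j _ => sum_comm]
    exact H.sum_sum_neighborFinset_nonneg _ fun j j' _ =>
      sum_cmpSign_add_sum_cmpSign_nonneg (hA j) (hA j') ((hcard j).trans (hcard j').symm)
  calc ((Fintype.card W * (k * (Fintype.card ι - k)) : ℕ) : ℤ)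
      = ∑ j, ∑ i ∈ A j, ∑ i', cmpSign (σ (i, j)) (σ (i', j)) := by
        simp [sum_sum_cmpSign_of_isInitialSegment (hA _), card_compl, hcard]
    _ ≤ ∑ j, ∑ i ∈ A j, ((⊤ : SimpleGraph ι) □ H).signedDeg σ (i, j) := by
        simp only [signedDeg_top_boxProd, sum_add_distrib]
        linarith
    _ ≤ ∑ j, ∑ i ∈ A j, (brushWeight ((⊤ : SimpleGraph ι) □ H) σ (i, j) : ℤ) :=
        sum_le_sum fun j _ => sum_le_sum fun i _ => by
          rw [brushWeight_eq_max_signedDeg]; exact le_max_right _ _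
    _ ≤ ∑ j, ∑ i, (brushWeight ((⊤ : SimpleGraph ι) □ H) σ (i, j) : ℤ) :=
        sum_le_sum fun j _ => sum_le_sum_of_subset_of_nonneg (subset_univ _) fun _ _ _ => by
          positivity
    _ = ∑ v, (brushWeight ((⊤ : SimpleGraph ι) □ H) σ v : ℤ) := by
        rw [Fintype.sum_prod_type_right]

theorem card_mul_le_brushNumber_top_boxProd {k : ℕ} (hk : k ≤ Fintype.card ι) :
    Fintype.card W * (k * (Fintype.card ι - k)) ≤ brushNumber ((⊤ : SimpleGraph ι) □ H) :=
  le_brushNumber _ fun σ => by exact_mod_cast le_sum_brushWeight_top_boxProd H hk σ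

end LowerBound

theorem signedDeg_top_boxProd_pathGraph_prodLexOrder {m n : ℕ} (i : Fin m) (j : Fin n) :
    ((⊤ : SimpleGraph (Fin m)) □ pathGraph n).signedDeg (prodLexOrder m n) (i, j) =
      (m : ℤ) - 1 - 2 * i + (pathGraph n).signedDeg id j := by
  simp only [signedDeg_top_boxProd, (strictMono_prodLexOrder_fst j).cmpSign_comp,
    (strictMono_prodLexOrder_snd i).cmpSign_comp, Fin.sum_cmpSign]
  rfl

theorem sum_brushWeight_prodLexOrder (M n : ℕ) :
    ∑ v, (brushWeight ((⊤ : SimpleGraph (Fin (2 * M))) □ pathGraph n)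
      (prodLexOrder _ n) v : ℤ) = n * (M * M) := by
  simp only [brushWeight_eq_max_signedDeg]
  rw [Fintype.sum_prod_type_right]
  simp only [signedDeg_top_boxProd_pathGraph_prodLexOrder]
  calc _ = ∑ j : Fin n, ((M : ℤ) * M + M * (pathGraph n).signedDeg id j) :=
        sum_congr rfl fun j _ => by
          obtain ⟨h₁, h₂⟩ := abs_le.1 (abs_signedDeg_pathGraph_le_one n j)
          rw [← sum_range_max_zero M h₁ h₂, ← Fin.sum_univ_eq_sum_range]
          push_cast
          rfl
    _ = n * (M * M) := by
        rw [sum_add_distrib, ← mul_sum _ (fun j => (pathGraph n).signedDeg id j), sum_signedDeg]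
        simp

theorem brushNumber_top_boxProd_pathGraph_le (M n : ℕ) :
    brushNumber ((⊤ : SimpleGraph (Fin (2 * M))) □ pathGraph n) ≤ n * (M * M) :=
  (brushNumber_le_sum_brushWeight _ _).trans <| by
    exact_mod_cast (sum_brushWeight_prodLexOrder M n).le

end SimpleGraph

theorem brushNumber_complete_path_even_general (m n : ℕ) (hme : Even m) :
    brushNumber ((⊤ : SimpleGraph (Fin m)) □ pathGraph n) = n * (m ^ 2 / 4) := by
  obtain ⟨M, rfl⟩ := even_iff_two_dvd.1 hme
  have hsq : (2 * M) ^ 2 / 4 = M * M := by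
    rw [show (2 * M) ^ 2 = 4 * (M * M) by ring, Nat.mul_div_cancel_left _ four_pos]
  rw [hsq]
  refine le_antisymm (brushNumber_top_boxProd_pathGraph_le M n) ?_
  have h := card_mul_le_brushNumber_top_boxProd (ι := Fin (2 * M)) (pathGraph n) (k := M)
    (by rw [Fintype.card_fin]; omega)
  simpa [show 2 * M - M = M by omega] using h

/-- For every even integer m ≥ 2 and every integer n ≥ 2, the brush number of
K_m × P_n equals n·(m²/4). -/
theorem brushNumber_complete_path_even (m n : ℕ) (hm : 2 ≤ m) (hme : Even m)
    (hn : 2 ≤ n) :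
    brushNumber ((⊤ : SimpleGraph (Fin m)) □ pathGraph n) = n * (m ^ 2 / 4) :=
  brushNumber_complete_path_even_general m n hme
end

section
/- For every even integer m ≥ 2 and every integer n ≥ 2, the brush number of K_m × P_n is at most n·(m²/4). -/
open Finset SimpleGraph

lemma lexlt {m n : ℕ} (i i' : Fin m) (j j' : Fin n) :
    i.val + m * j.val < i'.val + m * j'.val ↔
      j.val < j'.val ∨ (j.val = j'.val ∧ i.val < i'.val) := by
  have h1 := i.isLt
  have h2 := i'.isLt
  constructor
  · intro h
    rcases lt_trichotomy j.val j'.val with hj | hj | hj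
    · exact Or.inl hj
    · refine Or.inr ⟨hj, ?_⟩
      rw [hj] at h; omega
    · exfalso
      have : m * (j'.val + 1) ≤ m * j.val := Nat.mul_le_mul_left m hj
      nlinarith
  · rintro (hj | ⟨hj, hi⟩)
    · have : m * (j.val + 1) ≤ m * j'.val := Nat.mul_le_mul_left m hj
      nlinarith
    · rw [hj]; omega

noncomputable def myOrd (m n : ℕ) : (Fin m × Fin n) ≃ Fin (Fintype.card (Fin m × Fin n)) :=
  (Equiv.prodComm (Fin m) (Fin n)).trans (finProdFinEquiv.trans
    (finCongr (by simp [mul_comm])))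

lemma myOrd_val {m n : ℕ} (v : Fin m × Fin n) :
    ((myOrd m n) v : ℕ) = v.1.val + m * v.2.val := rfl

lemma myOrd_lt {m n : ℕ} (v u : Fin m × Fin n) :
    myOrd m n v < myOrd m n u ↔
      v.2.val < u.2.val ∨ (v.2.val = u.2.val ∧ v.1.val < u.1.val) := by
  rw [Fin.lt_def, myOrd_val, myOrd_val, lexlt]

open scoped Classical in
lemma cardUpper {m n : ℕ} (i : Fin m) (j : Fin n) :
    (Finset.univ.filter (fun u : Fin m × Fin n =>
        ((⊤ : SimpleGraph (Fin m)) □ pathGraph n).Adj (i, j) u ∧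
          myOrd m n (i, j) < myOrd m n u)).card
      = (m - 1 - i.val) + (if j.val + 1 < n then 1 else 0) := by
  by_cases h : j.val + 1 < n
  · rw [if_pos h]
    have he : (Finset.univ.filter (fun u : Fin m × Fin n =>
        ((⊤ : SimpleGraph (Fin m)) □ pathGraph n).Adj (i, j) u ∧
          myOrd m n (i, j) < myOrd m n u))
        = (Finset.Ioi i ×ˢ {j}) ∪ {(i, ⟨j.val + 1, h⟩)} := by
      ext ⟨i', j'⟩
      have h1 := i'.isLt
      have h2 := j'.isLt
      simp only [mem_filter, mem_univ, true_and, myOrd_lt]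
      simp only [boxProd_adj, top_adj, pathGraph_adj,
        mem_union, mem_product, mem_Ioi, mem_singleton, Prod.mk.injEq,
        Fin.lt_def, Fin.ext_iff, ne_eq]
      omega
    rw [he, card_union_of_disjoint, card_product, Fin.card_Ioi, card_singleton]
    · simp
    · rw [Finset.disjoint_singleton_right]
      simp only [mem_product, mem_Ioi, mem_singleton, Fin.ext_iff]
      omega
  · rw [if_neg h]
    have he : (Finset.univ.filter (fun u : Fin m × Fin n =>
        ((⊤ : SimpleGraph (Fin m)) □ pathGraph n).Adj (i, j) u ∧
          myOrd m n (i, j) < myOrd m n u))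
        = (Finset.Ioi i ×ˢ {j}) := by
      ext ⟨i', j'⟩
      have h1 := i'.isLt
      have h2 := j'.isLt
      simp only [mem_filter, mem_univ, true_and, myOrd_lt]
      simp only [boxProd_adj, top_adj, pathGraph_adj,
        mem_product, mem_Ioi, mem_singleton, Prod.mk.injEq,
        Fin.lt_def, Fin.ext_iff, ne_eq]
      omega
    rw [he, card_product, Fin.card_Ioi, card_singleton]
    simp

open scoped Classical in
lemma cardLower {m n : ℕ} (i : Fin m) (j : Fin n) :
    (Finset.univ.filter (fun u : Fin m × Fin n =>
        ((⊤ : SimpleGraph (Fin m)) □ pathGraph n).Adj (i, j) u ∧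
          myOrd m n u < myOrd m n (i, j))).card
      = i.val + (if 0 < j.val then 1 else 0) := by
  by_cases h : 0 < j.val
  · rw [if_pos h]
    have he : (Finset.univ.filter (fun u : Fin m × Fin n =>
        ((⊤ : SimpleGraph (Fin m)) □ pathGraph n).Adj (i, j) u ∧
          myOrd m n u < myOrd m n (i, j)))
        = (Finset.Iio i ×ˢ {j}) ∪ {(i, ⟨j.val - 1, by omega⟩)} := by
      ext ⟨i', j'⟩
      have h1 := i'.isLt
      have h2 := j'.isLt
      have h3 := j.isLt
      simp only [mem_filter, mem_univ, true_and, myOrd_lt]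
      simp only [boxProd_adj, top_adj, pathGraph_adj,
        mem_union, mem_product, mem_Iio, mem_singleton, Prod.mk.injEq,
        Fin.lt_def, Fin.ext_iff, ne_eq]
      omega
    rw [he, card_union_of_disjoint, card_product, Fin.card_Iio, card_singleton]
    · simp
    · rw [Finset.disjoint_singleton_right]
      simp only [mem_product, mem_Iio, mem_singleton, Fin.ext_iff]
      omega
  · rw [if_neg h]
    have he : (Finset.univ.filter (fun u : Fin m × Fin n =>
        ((⊤ : SimpleGraph (Fin m)) □ pathGraph n).Adj (i, j) u ∧
          myOrd m n u < myOrd m n (i, j)))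
        = (Finset.Iio i ×ˢ {j}) := by
      ext ⟨i', j'⟩
      have h1 := i'.isLt
      have h2 := j'.isLt
      simp only [mem_filter, mem_univ, true_and, myOrd_lt]
      simp only [boxProd_adj, top_adj, pathGraph_adj,
        mem_product, mem_Iio, mem_singleton, Prod.mk.injEq,
        Fin.lt_def, Fin.ext_iff, ne_eq]
      omega
    rw [he, card_product, Fin.card_Iio, card_singleton]
    simp


open scoped Classical in
lemma weight_eq {m n : ℕ} (i : Fin m) (j : Fin n) :
    brushWeight ((⊤ : SimpleGraph (Fin m)) □ pathGraph n) (myOrd m n) (i, j)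
      = ((m - 1 - i.val) + (if j.val + 1 < n then 1 else 0)) -
        (i.val + (if 0 < j.val then 1 else 0)) := by
  unfold brushWeight
  rw [cardUpper, cardLower]

lemma sumB : ∀ (s : ℕ), ∀ c : ℕ, 2 * s ≤ c + 2 →
    (∑ i ∈ Finset.range s, (c - 2 * i)) + s * (s - 1) = s * c := by
  intro s
  induction s with
  | zero => simp
  | succ t ih =>
    intro c h
    rw [Finset.sum_range_succ]
    have h1 := ih c (by omega)
    have e3 : (t + 1) * t = t * (t - 1) + 2 * t := by
      cases t with
      | zero => simp
      | succ u => simp only [Nat.succ_sub_one]; ring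
    have e4 : (t + 1) * c = t * c + c := by ring
    have e5 : (t + 1) * (t + 1 - 1) = (t + 1) * t := by simp
    omega

lemma sumFull (t c s : ℕ) (h1 : s ≤ t) (h2 : c ≤ 2 * s) (h3 : 2 * s ≤ c + 2) :
    (∑ i ∈ Finset.range t, (c - 2 * i)) + s * (s - 1) = s * c := by
  rw [← Finset.sum_subset (Finset.range_subset_range.mpr h1)
    (fun x _ hx => by simp only [Finset.mem_range, not_lt] at hx; omega)]
  exact sumB s c h3

lemma S1 (k : ℕ) : ∑ i ∈ Finset.range (k + k), ((k + k) - 2 * i) = k * k + k := by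
  have h := sumFull (k + k) (k + k) k (by omega) (by omega) (by omega)
  have e1 : k * (k - 1) + k = k * k := by
    cases k with
    | zero => simp
    | succ u => simp only [Nat.succ_sub_one]; ring
  have e2 : k * (k + k) = k * k + k * k := by ring
  omega

lemma S2 (k : ℕ) : ∑ i ∈ Finset.range (k + k), ((k + k - 1) - 2 * i) = k * k := by
  have h := sumFull (k + k) (k + k - 1) k (by omega) (by omega) (by omega)
  have e1 : k * (k - 1) + k = k * k := by
    cases k with
    | zero => simp
    | succ u => simp only [Nat.succ_sub_one]; ring
  have e2 : k * (k + k - 1) + k = k * k + k * k := by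
    cases k with
    | zero => simp
    | succ u =>
      have : u + 1 + (u + 1) - 1 = u + u + 1 := by omega
      rw [this]; ring
  omega

lemma S3 (k : ℕ) (hk : 1 ≤ k) :
    ∑ i ∈ Finset.range (k + k), ((k + k - 2) - 2 * i) = k * k - k := by
  obtain ⟨u, rfl⟩ : ∃ u, k = u + 1 := ⟨k - 1, by omega⟩
  have h := sumFull (u + 1 + (u + 1)) (u + 1 + (u + 1) - 2) u (by omega) (by omega) (by omega)
  have e1 : u * (u - 1) + u = u * u := by
    cases u with
    | zero => simp
    | succ v => simp only [Nat.succ_sub_one]; ring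
  have e2 : u * (u + 1 + (u + 1) - 2) = u * u + u * u := by
    have : u + 1 + (u + 1) - 2 = u + u := by omega
    rw [this]; ring
  have e3 : (u + 1) * (u + 1) = u * u + 2 * u + 1 := by ring
  omega

open scoped Classical in
lemma row {m n : ℕ} (k : ℕ) (hk : m = k + k) (hk1 : 1 ≤ k) (hn : 2 ≤ n) (j : Fin n) :
    ∑ i : Fin m, brushWeight ((⊤ : SimpleGraph (Fin m)) □ pathGraph n) (myOrd m n) (i, j)
      = if j.val = 0 then k * k + k else if j.val = n - 1 then k * k - k else k * k := by
  have hj := j.isLt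
  simp only [weight_eq]
  by_cases h0 : j.val = 0
  · rw [if_pos h0]
    have ha : (if j.val + 1 < n then 1 else 0) = 1 := if_pos (by omega)
    have hb : (if 0 < j.val then 1 else 0) = 0 := if_neg (by omega)
    simp only [ha, hb]
    rw [Fin.sum_univ_eq_sum_range (fun i => (m - 1 - i + 1) - (i + 0))]
    rw [Finset.sum_congr rfl (fun i hi => by
      simp only [Finset.mem_range] at hi
      show (m - 1 - i + 1) - (i + 0) = (k + k) - 2 * i
      omega)]
    subst hk; exact S1 k
  · rw [if_neg h0]
    by_cases hL : j.val = n - 1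
    · rw [if_pos hL]
      have ha : (if j.val + 1 < n then 1 else 0) = 0 := if_neg (by omega)
      have hb : (if 0 < j.val then 1 else 0) = 1 := if_pos (by omega)
      simp only [ha, hb]
      rw [Fin.sum_univ_eq_sum_range (fun i => (m - 1 - i + 0) - (i + 1))]
      rw [Finset.sum_congr rfl (fun i hi => by
        simp only [Finset.mem_range] at hi
        show (m - 1 - i + 0) - (i + 1) = (k + k - 2) - 2 * i
        omega)]
      subst hk; exact S3 k hk1
    · rw [if_neg hL]
      have ha : (if j.val + 1 < n then 1 else 0) = 1 := if_pos (by omega)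
      have hb : (if 0 < j.val then 1 else 0) = 1 := if_pos (by omega)
      simp only [ha, hb]
      rw [Fin.sum_univ_eq_sum_range (fun i => (m - 1 - i + 1) - (i + 1))]
      rw [Finset.sum_congr rfl (fun i hi => by
        simp only [Finset.mem_range] at hi
        show (m - 1 - i + 1) - (i + 1) = (k + k - 1) - 2 * i
        omega)]
      subst hk; exact S2 k

lemma colSum (n k : ℕ) (hn : 2 ≤ n) (hk1 : 1 ≤ k) :
    ∑ t ∈ Finset.range n,
      (if t = 0 then k * k + k else if t = n - 1 then k * k - k else k * k)
      = n * (k * k) := by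
  obtain ⟨p, rfl⟩ : ∃ p, n = p + 2 := ⟨n - 2, by omega⟩
  have hd : Finset.range (p + 2) = insert 0 (insert (p + 1) (Finset.Ioo 0 (p + 1))) := by
    ext t
    simp only [Finset.mem_range, Finset.mem_insert, Finset.mem_Ioo]
    omega
  rw [hd, Finset.sum_insert, Finset.sum_insert]
  · have h1 : (if (0:ℕ) = 0 then k * k + k else if (0:ℕ) = p + 2 - 1 then k * k - k else k * k)
        = k * k + k := by simp
    have h2 : (if p + 1 = 0 then k * k + k else if p + 1 = p + 2 - 1 then k * k - k else k * k)
        = k * k - k := by simp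
    rw [h1, h2]
    rw [Finset.sum_congr rfl (fun t ht => by
      simp only [Finset.mem_Ioo] at ht
      rw [if_neg (by omega), if_neg (by omega)])]
    rw [Finset.sum_const, Nat.card_Ioo, smul_eq_mul]
    have hkk : k ≤ k * k := Nat.le_mul_of_pos_left k hk1
    have e : (p + 2) * (k * k) = k * k + (k * k + (p + 1 - 0 - 1) * (k * k)) := by
      have : p + 1 - 0 - 1 = p := by omega
      rw [this]; ring
    omega
  · simp only [Finset.mem_Ioo]; omega
  · simp only [Finset.mem_insert, Finset.mem_Ioo]; omega


/-- For every even integer m ≥ 2 and every integer n ≥ 2, the brush number of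
K_m × P_n is at most n·(m²/4). -/
theorem brushNumber_complete_path_even_le (m n : ℕ) (hm : 2 ≤ m) (hme : Even m)
    (hn : 2 ≤ n) :
    brushNumber ((⊤ : SimpleGraph (Fin m)) □ pathGraph n) ≤ n * (m ^ 2 / 4) := by
  obtain ⟨k, hk⟩ := hme
  have hk1 : 1 ≤ k := by omega
  have hq : m ^ 2 / 4 = k * k := by
    have h4 : m ^ 2 = 4 * (k * k) := by subst hk; ring
    rw [h4, Nat.mul_div_cancel_left _ (by norm_num)]
  rw [hq]
  have hle : brushNumber ((⊤ : SimpleGraph (Fin m)) □ pathGraph n)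
      ≤ ∑ v, brushWeight ((⊤ : SimpleGraph (Fin m)) □ pathGraph n) (myOrd m n) v :=
    ciInf_le (OrderBot.bddBelow _) _
  refine hle.trans ?_
  rw [Fintype.sum_prod_type_right]
  rw [Finset.sum_congr rfl (fun j _ => row k hk hk1 hn j)]
  rw [Fin.sum_univ_eq_sum_range
    (fun t => if t = 0 then k * k + k else if t = n - 1 then k * k - k else k * k)]
  rw [colSum n k hn hk1]
end

section
/- For every integer m ≥ 2 and every simple graph G on m vertices with at least one edge, 1 = b(P_m) ≤ b(G) ≤ b(K_m) = ⌊m²/4⌋. -/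
open Finset SimpleGraph

lemma brushWeight_eq {V : Type} [Fintype V] (G : SimpleGraph V)
    (σ : V ≃ Fin (Fintype.card V)) (v : V)
    [DecidablePred (fun u => G.Adj v u ∧ σ v < σ u)]
    [DecidablePred (fun u => G.Adj v u ∧ σ u < σ v)] :
    brushWeight G σ v =
      (Finset.univ.filter (fun u => G.Adj v u ∧ σ v < σ u)).card -
        (Finset.univ.filter (fun u => G.Adj v u ∧ σ u < σ v)).card := by
  unfold brushWeight
  congr

section Helpers

variable {V : Type} [Fintype V] [DecidableEq V]

omit [DecidableEq V] in
/-- Any injection into ℕ induces an ordering equiv with the same comparisons. -/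
lemma exists_equiv_order (f : V → ℕ) (hf : Function.Injective f) :
    ∃ σ : V ≃ Fin (Fintype.card V), ∀ a b : V, σ a < σ b ↔ f a < f b := by
  classical
  set t : Finset ℕ := Finset.univ.image f with ht
  have htc : t.card = Fintype.card V := by
    rw [ht, Finset.card_image_of_injective _ hf, Finset.card_univ]
  let e1 : V ≃ t := Equiv.ofBijective
    (fun x => ⟨f x, Finset.mem_image.mpr ⟨x, Finset.mem_univ x, rfl⟩⟩)
    ⟨fun a b hab => hf (congrArg Subtype.val hab), fun y => by
      obtain ⟨x, -, hx⟩ := Finset.mem_image.mp y.2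
      exact ⟨x, Subtype.ext hx⟩⟩
  let iso := t.orderIsoOfFin htc
  refine ⟨e1.trans iso.symm.toEquiv, fun a b => ?_⟩
  change iso.symm (e1 a) < iso.symm (e1 b) ↔ _
  rw [iso.symm.lt_iff_lt]
  exact Subtype.mk_lt_mk

lemma sum_split (u v : V) (huv : u ≠ v) (g : V → ℕ) :
    ∑ y, g y = g u + g v + ∑ x : {y : V // y ≠ u ∧ y ≠ v}, g x.val := by
  classical
  have hsub : ({u, v} : Finset V) ⊆ univ := Finset.subset_univ _
  have h1 := Finset.sum_sdiff (f := g) hsub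
  have h2 : ∑ y ∈ ({u, v} : Finset V), g y = g u + g v := Finset.sum_pair huv
  have h3 : ∑ y ∈ (univ \ ({u, v} : Finset V)), g y
      = ∑ x : {y : V // y ≠ u ∧ y ≠ v}, g x.val := by
    apply Finset.sum_subtype
    intro x
    simp [not_or]
  omega

lemma card_split (u v : V) (huv : u ≠ v) (Q : V → Prop) [DecidablePred Q] :
    (univ.filter Q).card
      = (if Q u then 1 else 0) + (if Q v then 1 else 0)
        + (univ.filter (fun x : {y : V // y ≠ u ∧ y ≠ v} => Q x.val)).card := by
  classical
  simp only [Finset.card_filter]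
  exact sum_split u v huv _

omit [Fintype V] [DecidableEq V] in
lemma card_filter_equiv {α β : Type} [Fintype α] [Fintype β] (e : α ≃ β)
    (q : β → Prop) [DecidablePred q] :
    (univ.filter (fun a => q (e a))).card = (univ.filter q).card := by
  apply Finset.card_bij (fun a _ => e a)
  · intro a ha
    simp only [Finset.mem_filter, Finset.mem_univ, true_and] at ha ⊢
    exact ha
  · intro a _ b _ hab
    exact e.injective hab
  · intro b hb
    refine ⟨e.symm b, ?_, by simp⟩
    simp only [Finset.mem_filter, Finset.mem_univ, true_and] at hb ⊢
    simpa using hb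

omit [DecidableEq V] in
/-- If `G` has an edge then every ordering needs at least one brush. -/
lemma one_le_brushNumber (G : SimpleGraph V) (h : ∃ u v, G.Adj u v) :
    1 ≤ brushNumber G := by
  classical
  haveI : Nonempty (V ≃ Fin (Fintype.card V)) := ⟨Fintype.equivFin V⟩
  apply le_ciInf
  intro σ
  obtain ⟨u0, v0, huv⟩ := h
  set s : Finset V := univ.filter (fun v : V => ∃ u, G.Adj v u) with hs
  have hsne : s.Nonempty := ⟨u0, by simp only [hs, Finset.mem_filter, Finset.mem_univ, true_and]; exact ⟨v0, huv⟩⟩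
  obtain ⟨v, hv, hmin⟩ := Finset.exists_min_image s (fun x => σ x) hsne
  have hvs : ∃ u, G.Adj v u := by
    simpa only [hs, Finset.mem_filter, Finset.mem_univ, true_and] using hv
  obtain ⟨u, hadj⟩ := hvs
  have hminus : (univ.filter (fun u => G.Adj v u ∧ σ u < σ v)) = ∅ := by
    apply Finset.filter_false_of_mem
    rintro x - ⟨hx, hlt⟩
    have hxs : x ∈ s := by
      simp only [hs, Finset.mem_filter, Finset.mem_univ, true_and]
      exact ⟨v, hx.symm⟩
    exact absurd (hmin x hxs) (not_le.mpr hlt)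
  have hplus : u ∈ univ.filter (fun u => G.Adj v u ∧ σ v < σ u) := by
    simp only [Finset.mem_filter, Finset.mem_univ, true_and]
    refine ⟨hadj, ?_⟩
    have hus : u ∈ s := by
      simp only [hs, Finset.mem_filter, Finset.mem_univ, true_and]
      exact ⟨v, hadj.symm⟩
    have h1 : σ v ≤ σ u := hmin u hus
    have h2 : σ v ≠ σ u := fun he => G.ne_of_adj hadj (σ.injective he)
    exact lt_of_le_of_ne h1 h2
  have h1 : 1 ≤ brushWeight G σ v := by
    unfold brushWeight
    rw [hminus]
    simpa using Finset.card_pos.mpr ⟨u, hplus⟩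
  calc 1 ≤ brushWeight G σ v := h1
    _ ≤ ∑ w, brushWeight G σ w :=
      Finset.single_le_sum (fun i _ => Nat.zero_le _) (Finset.mem_univ v)

end Helpers

lemma sumAux : ∀ n : ℕ, ∑ i ∈ Finset.range n, (n - 1 - i - i) = n ^ 2 / 4 := by
  intro n
  induction n using Nat.strong_induction_on with
  | _ n ih =>
    match n with
    | 0 => simp
    | 1 => simp
    | (m + 2) =>
      rw [Finset.sum_range_succ']
      have h1 : ∀ j ∈ Finset.range (m + 1), (m + 2 - 1 - (j + 1) - (j + 1)) = (fun j => m - 1 - j - j) j := by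
        intro j _
        show m + 2 - 1 - (j + 1) - (j + 1) = m - 1 - j - j
        omega
      rw [Finset.sum_congr rfl h1, Finset.sum_range_succ]
      have h2 : m - 1 - m - m = 0 := by omega
      rw [h2, ih m (by omega), add_zero]
      have h3 : m + 2 - 1 - 0 - 0 = m + 1 := by omega
      rw [h3]
      have h4 : (m + 2) ^ 2 = m ^ 2 + 4 * (m + 1) := by ring
      rw [h4, Nat.add_mul_div_left _ _ (by norm_num : (0:ℕ) < 4)]

lemma top_sum (m : ℕ) (σ : Fin m ≃ Fin (Fintype.card (Fin m))) :
    ∑ v, brushWeight (⊤ : SimpleGraph (Fin m)) σ v = m ^ 2 / 4 := by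
  classical
  have hw : ∀ v : Fin m, brushWeight (⊤ : SimpleGraph (Fin m)) σ v
      = (m - 1 - (σ v : ℕ)) - (σ v : ℕ) := by
    intro v
    rw [brushWeight_eq]
    have h1 : (univ.filter (fun u => (⊤ : SimpleGraph (Fin m)).Adj v u ∧ σ v < σ u))
        = univ.filter (fun u => σ v < σ u) := by
      apply Finset.filter_congr
      intro u _
      simp only [SimpleGraph.top_adj]
      constructor
      · exact And.right
      · intro h
        exact ⟨fun he => absurd (he ▸ h) (lt_irrefl _), h⟩
    have h2 : (univ.filter (fun u => (⊤ : SimpleGraph (Fin m)).Adj v u ∧ σ u < σ v))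
        = univ.filter (fun u => σ u < σ v) := by
      apply Finset.filter_congr
      intro u _
      simp only [SimpleGraph.top_adj]
      constructor
      · exact And.right
      · intro h
        exact ⟨fun he => absurd (he ▸ h) (lt_irrefl _), h⟩
    rw [h1, h2, card_filter_equiv σ (fun j => σ v < j), card_filter_equiv σ (fun j => j < σ v)]
    have h3 : univ.filter (fun j => σ v < j) = Finset.Ioi (σ v) := by
      ext j; simp
    have h4 : univ.filter (fun j => j < σ v) = Finset.Iio (σ v) := by
      ext j; simp
    rw [h3, h4, Fin.card_Ioi, Fin.card_Iio]
    have hc := Fintype.card_fin m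
    omega
  calc ∑ v, brushWeight (⊤ : SimpleGraph (Fin m)) σ v
      = ∑ v : Fin m, ((m - 1 - (σ v : ℕ)) - (σ v : ℕ)) := Finset.sum_congr rfl (fun v _ => hw v)
    _ = ∑ j : Fin (Fintype.card (Fin m)), ((m - 1 - (j : ℕ)) - (j : ℕ)) :=
        Equiv.sum_comp σ (fun j => (m - 1 - (j : ℕ)) - (j : ℕ))
    _ = ∑ i ∈ Finset.range (Fintype.card (Fin m)), (m - 1 - i - i) :=
        Fin.sum_univ_eq_sum_range (fun i => m - 1 - i - i) (Fintype.card (Fin m))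
    _ = m ^ 2 / 4 := by rw [Fintype.card_fin]; exact sumAux m

lemma brushNumber_top (m : ℕ) : brushNumber (⊤ : SimpleGraph (Fin m)) = m ^ 2 / 4 := by
  haveI : Nonempty (Fin m ≃ Fin (Fintype.card (Fin m))) := ⟨Fintype.equivFin _⟩
  unfold brushNumber
  rw [show (fun σ : Fin m ≃ Fin (Fintype.card (Fin m)) =>
      ∑ v, brushWeight (⊤ : SimpleGraph (Fin m)) σ v) = fun _ => m ^ 2 / 4 from
    funext (top_sum m)]
  exact ciInf_const

lemma path_le_one (m : ℕ) (hm : 2 ≤ m) : brushNumber (pathGraph m) ≤ 1 := by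
  classical
  let σ : Fin m ≃ Fin (Fintype.card (Fin m)) := finCongr (Fintype.card_fin m).symm
  have hord : ∀ a b : Fin m, σ a < σ b ↔ (a : ℕ) < (b : ℕ) := by
    intro a b
    simp only [σ, finCongr_apply, Fin.lt_def, Fin.coe_cast]
  refine le_trans (ciInf_le' _ σ) ?_
  have hbound : ∀ v : Fin m, brushWeight (pathGraph m) σ v ≤ if (v : ℕ) = 0 then 1 else 0 := by
    intro v
    rw [brushWeight_eq]
    have hdp : (univ.filter (fun u => (pathGraph m).Adj v u ∧ σ v < σ u)).card ≤ 1 := by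
      apply Finset.card_le_one.mpr
      intro a ha b hb
      simp only [Finset.mem_filter, Finset.mem_univ, true_and, pathGraph_adj, hord] at ha hb
      apply Fin.ext
      omega
    by_cases h0 : (v : ℕ) = 0
    · rw [if_pos h0]
      exact le_trans (Nat.sub_le _ _) hdp
    · rw [if_neg h0]
      have hdm : 1 ≤ (univ.filter (fun u => (pathGraph m).Adj v u ∧ σ u < σ v)).card := by
        have hv : (v : ℕ) < m := v.isLt
        refine Finset.card_pos.mpr ⟨⟨(v : ℕ) - 1, by omega⟩, ?_⟩
        simp only [Finset.mem_filter, Finset.mem_univ, true_and, pathGraph_adj, hord]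
        refine ⟨Or.inr ?_, ?_⟩
        · show (v : ℕ) - 1 + 1 = (v : ℕ)
          omega
        · show (v : ℕ) - 1 < (v : ℕ)
          omega
      omega
  calc ∑ v, brushWeight (pathGraph m) σ v
      ≤ ∑ v : Fin m, (if (v : ℕ) = 0 then 1 else 0) := Finset.sum_le_sum (fun v _ => hbound v)
    _ = 1 := by
        have he : ∀ v : Fin m, ((v : ℕ) = 0) = (v = ⟨0, by omega⟩) := by
          intro v
          simp [Fin.ext_iff]
        simp only [he]
        rw [Finset.sum_ite_eq' univ (⟨0, by omega⟩ : Fin m) (fun _ => 1)]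
        simp

lemma brushNumber_le_quarter : ∀ (n : ℕ) (V : Type) [Fintype V] (G : SimpleGraph V),
    Fintype.card V = n → brushNumber G ≤ n ^ 2 / 4 := by
  intro n
  induction n using Nat.strong_induction_on with
  | _ n ih =>
    intro V instV G hcard
    classical
    by_cases hn : n < 2
    · -- trivial small cases
      haveI hne : Nonempty (V ≃ Fin (Fintype.card V)) := ⟨Fintype.equivFin V⟩
      obtain ⟨σ⟩ := hne
      have hz : ∑ y, brushWeight G σ y = 0 := by
        apply Finset.sum_eq_zero
        intro y _
        have hsub : Subsingleton V := by
          rw [← Fintype.card_le_one_iff_subsingleton]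
          omega
        rw [brushWeight_eq]
        have h1 : (univ.filter fun w => G.Adj y w ∧ σ y < σ w) = ∅ := by
          apply Finset.filter_false_of_mem
          rintro x - ⟨hadj, -⟩
          exact G.ne_of_adj hadj (Subsingleton.elim _ _)
        rw [h1]
        simp
      calc brushNumber G ≤ ∑ y, brushWeight G σ y := ciInf_le' _ σ
        _ ≤ n ^ 2 / 4 := by omega
    · push_neg at hn
      obtain ⟨u, v, huv⟩ := Fintype.exists_pair_of_one_lt_card (α := V) (by omega)
      have hvu : v ≠ u := Ne.symm huv
      have hcard' : Fintype.card {y : V // y ≠ u ∧ y ≠ v} = n - 2 := by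
        rw [Fintype.card_subtype]
        have h1 : (univ.filter fun y : V => y ≠ u ∧ y ≠ v) = univ \ ({u, v} : Finset V) := by
          ext x
          simp [not_or]
        rw [h1, Finset.card_sdiff_of_subset (Finset.subset_univ _), Finset.card_pair huv,
          Finset.card_univ, hcard]
      set G' : SimpleGraph {y : V // y ≠ u ∧ y ≠ v} :=
        SimpleGraph.comap (Subtype.val) G with hG'
      have hIH : brushNumber G' ≤ (n - 2) ^ 2 / 4 := ih (n - 2) (by omega) _ G' hcard'
      obtain ⟨σ', hσ'⟩ : ∃ σ' : {y : V // y ≠ u ∧ y ≠ v} ≃ Fin (Fintype.card {y : V // y ≠ u ∧ y ≠ v}),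
          ∑ x, brushWeight G' σ' x = brushNumber G' := by
        haveI : Nonempty ({y : V // y ≠ u ∧ y ≠ v} ≃ Fin (Fintype.card {y : V // y ≠ u ∧ y ≠ v})) :=
          ⟨Fintype.equivFin _⟩
        obtain ⟨σ', h⟩ := Nat.sInf_mem
          (Set.range_nonempty (fun σ' : {y : V // y ≠ u ∧ y ≠ v} ≃ Fin (Fintype.card {y : V // y ≠ u ∧ y ≠ v}) =>
            ∑ x, brushWeight G' σ' x))
        exact ⟨σ', h⟩
      -- ordering: u first, v last, σ' in between
      set f : V → ℕ := fun y =>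
        if hy1 : y = u then 0 else if hy2 : y = v then n
        else ((σ' ⟨y, hy1, hy2⟩ : Fin _) : ℕ) + 1 with hf
      have hfu : f u = 0 := by simp [hf]
      have hfv : f v = n := by simp [hf, hvu]
      have hfo : ∀ (y : V) (h1 : y ≠ u) (h2 : y ≠ v), f y = (σ' ⟨y, h1, h2⟩ : ℕ) + 1 := by
        intro y h1 h2
        simp [hf, h1, h2]
      have hlt : ∀ x : {y : V // y ≠ u ∧ y ≠ v}, ((σ' x : ℕ)) < n - 2 := by
        intro x
        have := (σ' x).isLt
        omega
      have hinj : Function.Injective f := by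
        intro a b hab
        by_cases ha1 : a = u
        · by_cases hb1 : b = u
          · rw [ha1, hb1]
          · exfalso
            by_cases hb2 : b = v
            · rw [ha1, hb2, hfu, hfv] at hab; omega
            · rw [ha1, hfu, hfo b hb1 hb2] at hab; omega
        · by_cases ha2 : a = v
          · by_cases hb1 : b = u
            · exfalso; rw [ha2, hb1, hfv, hfu] at hab; omega
            · by_cases hb2 : b = v
              · rw [ha2, hb2]
              · exfalso
                rw [ha2, hfv, hfo b hb1 hb2] at hab
                have := hlt ⟨b, hb1, hb2⟩
                omega
          · by_cases hb1 : b = u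
            · exfalso; rw [hb1, hfu, hfo a ha1 ha2] at hab; omega
            · by_cases hb2 : b = v
              · exfalso
                rw [hb2, hfv, hfo a ha1 ha2] at hab
                have := hlt ⟨a, ha1, ha2⟩
                omega
              · rw [hfo a ha1 ha2, hfo b hb1 hb2] at hab
                have h3 : σ' ⟨a, ha1, ha2⟩ = σ' ⟨b, hb1, hb2⟩ := Fin.ext (by omega)
                exact congrArg Subtype.val (σ'.injective h3)
      obtain ⟨σ, hord⟩ := exists_equiv_order f hinj
      have hσu : ∀ x : V, x ≠ u → σ u < σ x := by
        intro x hx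
        rw [hord, hfu]
        by_cases hx2 : x = v
        · rw [hx2, hfv]; omega
        · rw [hfo x hx hx2]; omega
      have hσv : ∀ x : V, x ≠ v → σ x < σ v := by
        intro x hx
        rw [hord, hfv]
        by_cases hx1 : x = u
        · rw [hx1, hfu]; omega
        · rw [hfo x hx1 hx]
          have := hlt ⟨x, hx1, hx⟩
          omega
      have hσ3 : ∀ x y : {y : V // y ≠ u ∧ y ≠ v}, σ x.val < σ y.val ↔ σ' x < σ' y := by
        intro x y
        rw [hord, hfo x.val x.2.1 x.2.2, hfo y.val y.2.1 y.2.2,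
          show (⟨x.val, x.2.1, x.2.2⟩ : {y : V // y ≠ u ∧ y ≠ v}) = x from rfl,
          show (⟨y.val, y.2.1, y.2.2⟩ : {y : V // y ≠ u ∧ y ≠ v}) = y from rfl,
          Fin.lt_def]
        omega
      -- weight computations
      have hwv : brushWeight G σ v = 0 := by
        rw [brushWeight_eq]
        have h1 : (univ.filter fun w => G.Adj v w ∧ σ v < σ w) = ∅ := by
          apply Finset.filter_false_of_mem
          rintro x - ⟨hadj, hlt2⟩
          exact absurd hlt2 (not_lt.mpr (le_of_lt (hσv x (G.ne_of_adj hadj).symm)))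
        rw [h1]
        simp
      have hwu : brushWeight G σ u ≤ (univ.filter (fun y => G.Adj u y)).card := by
        rw [brushWeight_eq]
        refine le_trans (Nat.sub_le _ _) (Finset.card_le_card ?_)
        intro y hy
        simp only [Finset.mem_filter, Finset.mem_univ, true_and] at hy ⊢
        exact hy.1
      have hwx : ∀ x : {y : V // y ≠ u ∧ y ≠ v},
          brushWeight G σ x.val ≤ brushWeight G' σ' x
            + (if G.Adj x.val v ∧ ¬ G.Adj x.val u then 1 else 0) := by
        intro x
        rw [brushWeight_eq, brushWeight_eq]
        have hdp : (univ.filter fun y => G.Adj x.val y ∧ σ x.val < σ y).card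
            = (if G.Adj x.val v then 1 else 0)
              + (univ.filter fun z : {y : V // y ≠ u ∧ y ≠ v} => G'.Adj x z ∧ σ' x < σ' z).card := by
          rw [card_split u v huv]
          rw [if_neg (fun hc : G.Adj x.val u ∧ σ x.val < σ u =>
            absurd hc.2 (not_lt.mpr (le_of_lt (hσu x.val x.2.1))))]
          rw [zero_add]
          congr 1
          · by_cases hAv : G.Adj x.val v
            · rw [if_pos ⟨hAv, hσv x.val x.2.2⟩, if_pos hAv]
            · rw [if_neg (fun hc => hAv hc.1), if_neg hAv]
          · apply congrArg
            apply Finset.filter_congr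
            intro z _
            exact ⟨fun ⟨h1, h2⟩ => ⟨h1, (hσ3 x z).mp h2⟩, fun ⟨h1, h2⟩ => ⟨h1, (hσ3 x z).mpr h2⟩⟩
        have hdm : (univ.filter fun y => G.Adj x.val y ∧ σ y < σ x.val).card
            = (if G.Adj x.val u then 1 else 0)
              + (univ.filter fun z : {y : V // y ≠ u ∧ y ≠ v} => G'.Adj x z ∧ σ' z < σ' x).card := by
          rw [card_split u v huv]
          rw [show (if G.Adj x.val u ∧ σ u < σ x.val then 1 else 0)
              = (if G.Adj x.val u then 1 else 0) from by
            by_cases hAu : G.Adj x.val u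
            · rw [if_pos ⟨hAu, hσu x.val x.2.1⟩, if_pos hAu]
            · rw [if_neg (fun hc => hAu hc.1), if_neg hAu]]
          rw [if_neg (fun hc : G.Adj x.val v ∧ σ v < σ x.val =>
            absurd hc.2 (not_lt.mpr (le_of_lt (hσv x.val x.2.2))))]
          rw [add_zero]
          congr 1
          apply congrArg
          apply Finset.filter_congr
          intro z _
          exact ⟨fun ⟨h1, h2⟩ => ⟨h1, (hσ3 z x).mp h2⟩, fun ⟨h1, h2⟩ => ⟨h1, (hσ3 z x).mpr h2⟩⟩
        rw [hdp, hdm]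
        by_cases hAv : G.Adj x.val v <;> by_cases hAu : G.Adj x.val u <;>
          simp only [hAv, hAu, if_pos, if_neg, if_true, if_false, and_true, true_and,
            not_true, not_false_iff, and_false, false_and] <;> omega
      -- counting
      set A : Finset V := univ.filter (fun y => G.Adj u y) with hA
      set T : Finset {y : V // y ≠ u ∧ y ≠ v} :=
        univ.filter (fun x => G.Adj x.val v ∧ ¬ G.Adj x.val u) with hT
      have hcount : A.card + T.card ≤ n - 1 := by
        set T' : Finset V := T.map (Function.Embedding.subtype _) with hT'
        have hTc : T'.card = T.card := Finset.card_map _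
        have hdisj : Disjoint A T' := by
          rw [Finset.disjoint_left]
          intro a ha haT
          obtain ⟨x, hxT, hx⟩ := Finset.mem_map.mp haT
          rw [hT] at hxT
          simp only [Finset.mem_filter, Finset.mem_univ, true_and] at hxT
          rw [hA] at ha
          simp only [Finset.mem_filter, Finset.mem_univ, true_and] at ha
          apply hxT.2
          rw [show (Function.Embedding.subtype _) x = x.val from rfl] at hx
          rw [hx]
          exact ha.symm
        have hsub2 : A ∪ T' ⊆ univ.erase u := by
          intro a ha
          rw [Finset.mem_union] at ha
          rw [Finset.mem_erase]
          refine ⟨?_, Finset.mem_univ a⟩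
          rcases ha with ha | ha
          · rw [hA] at ha
            simp only [Finset.mem_filter, Finset.mem_univ, true_and] at ha
            exact (G.ne_of_adj ha).symm
          · obtain ⟨x, -, hx⟩ := Finset.mem_map.mp ha
            rw [show (Function.Embedding.subtype _) x = x.val from rfl] at hx
            rw [← hx]
            exact x.2.1
        have h9 := Finset.card_le_card hsub2
        rw [Finset.card_union_of_disjoint hdisj, Finset.card_erase_of_mem (Finset.mem_univ u),
          Finset.card_univ, hcard] at h9
        omega
      -- assembling
      have hsum : ∑ x : {y : V // y ≠ u ∧ y ≠ v}, brushWeight G σ x.val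
          ≤ brushNumber G' + T.card := by
        calc ∑ x : {y : V // y ≠ u ∧ y ≠ v}, brushWeight G σ x.val
            ≤ ∑ x : {y : V // y ≠ u ∧ y ≠ v},
              (brushWeight G' σ' x + (if G.Adj x.val v ∧ ¬ G.Adj x.val u then 1 else 0)) :=
              Finset.sum_le_sum (fun x _ => hwx x)
          _ = (∑ x, brushWeight G' σ' x)
              + ∑ x : {y : V // y ≠ u ∧ y ≠ v}, (if G.Adj x.val v ∧ ¬ G.Adj x.val u then 1 else 0) :=
              Finset.sum_add_distrib
          _ = brushNumber G' + T.card := by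
              rw [hσ', hT, Finset.card_filter]
      have harith : (n - 2) ^ 2 / 4 + (n - 1) = n ^ 2 / 4 := by
        obtain ⟨k, rfl⟩ : ∃ k, n = k + 2 := ⟨n - 2, by omega⟩
        simp only [Nat.add_sub_cancel]
        rw [show (k + 2) ^ 2 = k ^ 2 + 4 * (k + 1) by ring,
          Nat.add_mul_div_left _ _ (by norm_num : (0:ℕ) < 4)]
        omega
      calc brushNumber G ≤ ∑ y, brushWeight G σ y := ciInf_le' _ σ
        _ = brushWeight G σ u + brushWeight G σ v
            + ∑ x : {y : V // y ≠ u ∧ y ≠ v}, brushWeight G σ x.val := sum_split u v huv _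
        _ ≤ n ^ 2 / 4 := by omega

/-- For every integer m ≥ 2 and every simple graph G on m vertices with at least one
edge, 1 = b(P_m) ≤ b(G) ≤ b(K_m) = ⌊m²/4⌋. -/
theorem brushNumber_path_le_le_complete (m : ℕ) (hm : 2 ≤ m)
    (G : SimpleGraph (Fin m)) (hG : ∃ u v, G.Adj u v) :
    brushNumber (pathGraph m) = 1 ∧
      brushNumber (pathGraph m) ≤ brushNumber G ∧
      brushNumber G ≤ brushNumber (⊤ : SimpleGraph (Fin m)) ∧
      brushNumber (⊤ : SimpleGraph (Fin m)) = m ^ 2 / 4 := by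
  have hedge : ∃ u v, (pathGraph m).Adj u v := by
    refine ⟨⟨0, by omega⟩, ⟨1, by omega⟩, ?_⟩
    rw [pathGraph_adj]
    left
    rfl
  have h1 : brushNumber (pathGraph m) = 1 :=
    le_antisymm (path_le_one m hm) (one_le_brushNumber _ hedge)
  have h4 : brushNumber (⊤ : SimpleGraph (Fin m)) = m ^ 2 / 4 := brushNumber_top m
  refine ⟨h1, ?_, ?_, h4⟩
  · rw [h1]
    exact one_le_brushNumber G hG
  · rw [h4]
    exact brushNumber_le_quarter m (Fin m) G (Fintype.card_fin m)
end
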